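/- Let x ∈ I_fpf(S_{2n}). Then the set R̂_fpf(x) = R̂(w_fpf, x) is a single equivalence class under the equivalence relation on words in the simple transpositions s_1,…,s_{2n−1} generated by: (i) the braid relations of S_{2n}, i.e. replacing a consecutive pair (s_i, s_j) with |i−j| ≥ 2 by (s_j, s_i), or a consecutive triple (s_i, s_{i+1}, s_i) by (s_{i+1}, s_i, s_{i+1}); together with (ii) the initial relations (s_{2i}, s_{2i−1}, …) ∼ (s_{2i}, s_{2i+1}, …) for i ∈ [n−1], which exchange the second letter of a word beginning with (s_{2i}, s_{2i−1}) or (s_{2i}, s_{2i+1}), leaving the rest of the word unchanged. -/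
import Mathlib


open Equiv
open scoped Classical

/-- The simple transposition `s_{i+1} = (i+1, i+2)` of `S_n` (zero-indexed: it swaps the
elements `i` and `i + 1` of `Fin n`), or the identity if `i + 1 ≥ n`. -/
def sP (n : ℕ) (i : ℕ) : Equiv.Perm (Fin n) :=
  if h : i + 1 < n then Equiv.swap ⟨i, Nat.lt_of_succ_lt h⟩ ⟨i + 1, h⟩ else 1

/-- The Coxeter length of a permutation: its number of inversions. -/
noncomputable def lenP {n : ℕ} (w : Equiv.Perm (Fin n)) : ℕ :=
  (Finset.univ.filter (fun p : Fin n × Fin n => p.1 < p.2 ∧ w p.2 < w p.1)).card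

/-- One step of the conjugation action of the `0`-Hecke monoid on involutions:
`x ⋉ s = (s⁻¹ ∘ x) ∘ s` where `∘` is the Demazure product. -/
noncomputable def iStep {n : ℕ} (x : Equiv.Perm (Fin n)) (i : ℕ) : Equiv.Perm (Fin n) :=
  if lenP (x * sP n i) < lenP x then x
  else if sP n i * x = x * sP n i then x * sP n i
  else sP n i * x * sP n i

/-- Iterated action `((x ⋉ s_{i₁}) ⋉ s_{i₂}) ⋉ ⋯ ⋉ s_{iₖ}` of a word on an involution. -/
noncomputable def iWord {n : ℕ} (x : Equiv.Perm (Fin n)) (l : List ℕ) : Equiv.Perm (Fin n) :=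
  l.foldl iStep x

/-- Product of the word `(s_{i₁}, …, s_{iₖ})` in `S_n`. -/
def wordProdP (n : ℕ) (l : List ℕ) : Equiv.Perm (Fin n) := (l.map (sP n)).prod

/-- A word is reduced if its length equals the length of its product. -/
noncomputable def ReducedWordP (n : ℕ) (l : List ℕ) : Prop :=
  lenP (wordProdP n l) = l.length

/-- The Hecke atoms `B(x, y) = {w ∈ S_n : x ⋉ w = y}`:  `x ⋉ w` is computed by applying any
reduced word of `w` letter by letter. -/
noncomputable def HeckeP (n : ℕ) (x y : Equiv.Perm (Fin n)) : Set (Equiv.Perm (Fin n)) :=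
  {w | ∃ l : List ℕ, wordProdP n l = w ∧ ReducedWordP n l ∧ iWord x l = y}

/-- The atoms `A(x, y)`: minimal-length elements of `B(x, y)`. -/
noncomputable def AtomsP (n : ℕ) (x y : Equiv.Perm (Fin n)) : Set (Equiv.Perm (Fin n)) :=
  {w ∈ HeckeP n x y | ∀ v ∈ HeckeP n x y, lenP w ≤ lenP v}

/-- The involution words `R̂(x, y)` of `y` relative to `x`. -/
noncomputable def InvWordsP (n : ℕ) (x y : Equiv.Perm (Fin n)) : Set (List ℕ) :=
  {l | iWord x l = y ∧ ∀ l' : List ℕ, iWord x l' = y → l.length ≤ l'.length}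

/-- The fixed-point-free involution `w_fpf = s_1 s_3 s_5 ⋯ s_{2n-1} ∈ S_{2n}`. -/
def wfpfP (n : ℕ) : Equiv.Perm (Fin (2 * n)) :=
  ((List.range n).map (fun i => sP (2 * n) (2 * i))).prod

/-- One braid move for `S_{2n}` on words in the (1-indexed) simple transpositions
`s_1, …, s_{2n-1}`, written 0-indexed (letter `i` stands for `s_{i+1}`): swap a consecutive
pair `(s_i, s_j)` with `|i - j| ≥ 2`, or replace a consecutive triple `(s_i, s_{i+1}, s_i)`
by `(s_{i+1}, s_i, s_{i+1})`. -/
def BraidStep (m : ℕ) (u v : List ℕ) : Prop :=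
  (∃ (p q : List ℕ) (i j : ℕ), i + 1 < m ∧ j + 1 < m ∧ (i + 2 ≤ j ∨ j + 2 ≤ i) ∧
     u = p ++ [i, j] ++ q ∧ v = p ++ [j, i] ++ q) ∨
  (∃ (p q : List ℕ) (i : ℕ), i + 2 < m ∧
     u = p ++ [i, i + 1, i] ++ q ∧ v = p ++ [i + 1, i, i + 1] ++ q)

/-- The initial fpf move: exchange the second letter of a word beginning with
`(s_{2i}, s_{2i-1})` or `(s_{2i}, s_{2i+1})` for `i ∈ [n-1]`; 0-indexed (letter `i` stands
for `s_{i+1}`): words beginning `(2i+1, 2i)` and `(2i+1, 2i+2)` with `i + 2 ≤ n`. -/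
def FpfHZStep (n : ℕ) (u v : List ℕ) : Prop :=
  ∃ (q : List ℕ) (i : ℕ), i + 2 ≤ n ∧
    u = [2 * i + 1, 2 * i] ++ q ∧ v = [2 * i + 1, 2 * i + 2] ++ q


namespace Fpf
open Equiv Finset

variable {N : ℕ}

lemma sP_eq_one {i : ℕ} (h : ¬ i + 1 < N) : sP N i = 1 := dif_neg h

lemma sP_def {i : ℕ} (h : i + 1 < N) :
    sP N i = Equiv.swap ⟨i, Nat.lt_of_succ_lt h⟩ ⟨i + 1, h⟩ := dif_pos h

lemma sP_mul_self (i : ℕ) : sP N i * sP N i = 1 := by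
  by_cases h : i + 1 < N
  · rw [sP_def h]; exact Equiv.swap_mul_self _ _
  · rw [sP_eq_one h]; simp

lemma sP_sP {i : ℕ} (p : Fin N) : sP N i (sP N i p) = p := by
  have := congrArg (fun f : Equiv.Perm (Fin N) => f p) (sP_mul_self (N := N) i)
  simpa using this

lemma sP_apply_left {i : ℕ} (h : i + 1 < N) :
    sP N i ⟨i, Nat.lt_of_succ_lt h⟩ = ⟨i + 1, h⟩ := by
  rw [sP_def h]; exact Equiv.swap_apply_left _ _

lemma sP_apply_right {i : ℕ} (h : i + 1 < N) :
    sP N i ⟨i + 1, h⟩ = ⟨i, Nat.lt_of_succ_lt h⟩ := by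
  rw [sP_def h]; exact Equiv.swap_apply_right _ _

lemma sP_apply_other {i : ℕ} (h : i + 1 < N) (p : Fin N)
    (h1 : (p : ℕ) ≠ i) (h2 : (p : ℕ) ≠ i + 1) : sP N i p = p := by
  rw [sP_def h]
  exact Equiv.swap_apply_of_ne_of_ne (fun he => h1 (by rw [he])) (fun he => h2 (by rw [he]))

lemma sP_val {i : ℕ} (h : i + 1 < N) (p : Fin N) :
    (sP N i p : ℕ) = if (p : ℕ) = i then i + 1 else if (p : ℕ) = i + 1 then i else p := by
  split_ifs with h1 h2
  · have : p = ⟨i, Nat.lt_of_succ_lt h⟩ := Fin.ext h1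
    rw [this, sP_apply_left h]
  · have : p = ⟨i + 1, h⟩ := Fin.ext h2
    rw [this, sP_apply_right h]
  · rw [sP_apply_other h p h1 h2]

/-- The inversion set of `w`. -/
noncomputable def invSet (w : Equiv.Perm (Fin N)) : Finset (Fin N × Fin N) :=
  Finset.univ.filter (fun p : Fin N × Fin N => p.1 < p.2 ∧ w p.2 < w p.1)

lemma lenP_eq_card (w : Equiv.Perm (Fin N)) : lenP w = (invSet w).card := rfl

lemma mem_invSet {w : Equiv.Perm (Fin N)} {p : Fin N × Fin N} :
    p ∈ invSet w ↔ p.1 < p.2 ∧ w p.2 < w p.1 := by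
  simp [invSet]

lemma lenP_inv (w : Equiv.Perm (Fin N)) : lenP w⁻¹ = lenP w := by
  rw [lenP_eq_card, lenP_eq_card]
  apply Finset.card_bij' (fun p _ => (w⁻¹ p.2, w⁻¹ p.1)) (fun p _ => (w p.2, w p.1))
  · intro p hp
    rw [mem_invSet] at hp ⊢
    exact ⟨hp.2, by simpa using hp.1⟩
  · intro p hp
    rw [mem_invSet] at hp ⊢
    exact ⟨hp.2, by simpa using hp.1⟩
  · intro p hp; simp
  · intro p hp; simp

lemma swap_adj_lt {i : ℕ} (h : i + 1 < N) {p q : Fin N} (hpq : p < q)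
    (hne : ¬((p : ℕ) = i ∧ (q : ℕ) = i + 1)) :
    sP N i p < sP N i q := by
  have hpq' : (p : ℕ) < (q : ℕ) := hpq
  rw [Fin.lt_iff_val_lt_val, sP_val h, sP_val h]
  split_ifs <;> omega

lemma lenP_mul_sP_of_lt {i : ℕ} (h : i + 1 < N) (w : Equiv.Perm (Fin N))
    (hw : w ⟨i, Nat.lt_of_succ_lt h⟩ < w ⟨i + 1, h⟩) :
    lenP (w * sP N i) = lenP w + 1 := by
  classical
  set a : Fin N := ⟨i, Nat.lt_of_succ_lt h⟩ with ha
  set b : Fin N := ⟨i + 1, h⟩ with hb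
  have hsa : sP N i a = b := sP_apply_left h
  have hsb : sP N i b = a := sP_apply_right h
  have hab : a < b := by rw [Fin.lt_iff_val_lt_val]; exact Nat.lt_succ_self i
  have key : invSet (w * sP N i) =
      insert (a, b) ((invSet w).image (fun p => (sP N i p.1, sP N i p.2))) := by
    apply Finset.ext
    rintro ⟨p, q⟩
    simp only [Finset.mem_insert, Finset.mem_image, mem_invSet, Prod.mk.injEq, Prod.exists]
    constructor
    · rintro ⟨h1, h2⟩
      by_cases hpq : p = a ∧ q = b
      · exact Or.inl ⟨hpq.1, hpq.2⟩
      · refine Or.inr ⟨sP N i p, sP N i q, ⟨?_, ?_⟩, ?_, ?_⟩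
        · apply swap_adj_lt h h1
          rintro ⟨hp1, hq1⟩
          exact hpq ⟨Fin.ext hp1, Fin.ext hq1⟩
        · exact h2
        · exact sP_sP p
        · exact sP_sP q
    · rintro (⟨hp, hq⟩ | ⟨p', q', ⟨h1, h2⟩, h3, h4⟩)
      · subst hp; subst hq
        refine ⟨hab, ?_⟩
        show w (sP N i b) < w (sP N i a)
        rw [hsa, hsb]; exact hw
      · subst h3; subst h4
        constructor
        · apply swap_adj_lt h h1
          rintro ⟨hp1, hq1⟩
          have : p' = a := Fin.ext hp1
          have hq' : q' = b := Fin.ext hq1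
          rw [this, hq'] at h2
          exact absurd hw (not_lt_of_gt h2)
        · show w (sP N i (sP N i q')) < w (sP N i (sP N i p'))
          rw [sP_sP, sP_sP]; exact h2
  rw [lenP_eq_card, key, Finset.card_insert_of_notMem, Finset.card_image_of_injective,
    ← lenP_eq_card]
  · intro x y hxy
    have h1 : sP N i x.1 = sP N i y.1 := congrArg Prod.fst hxy
    have h2 : sP N i x.2 = sP N i y.2 := congrArg Prod.snd hxy
    exact Prod.ext ((sP N i).injective h1) ((sP N i).injective h2)
  · simp only [Finset.mem_image, Prod.mk.injEq, not_exists, mem_invSet]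
    rintro ⟨p, q⟩ ⟨⟨h1, h2⟩, h3, h4⟩
    have hp : p = sP N i a := by rw [← h3, sP_sP]
    have hq : q = sP N i b := by rw [← h4, sP_sP]
    rw [hp, hq, hsa, hsb] at h1
    exact absurd hab (not_lt_of_gt h1)

lemma lenP_mul_sP_of_gt {i : ℕ} (h : i + 1 < N) (w : Equiv.Perm (Fin N))
    (hw : w ⟨i + 1, h⟩ < w ⟨i, Nat.lt_of_succ_lt h⟩) :
    lenP (w * sP N i) + 1 = lenP w := by
  have h2 := lenP_mul_sP_of_lt h (w * sP N i) (by
    simpa [Equiv.Perm.mul_apply, sP_apply_left h, sP_apply_right h] using hw)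
  rw [mul_assoc, sP_mul_self, mul_one] at h2
  omega

end Fpf

namespace Fpf
open Equiv Finset

variable {N : ℕ}

/-- fixed-point-free involution -/
def FI (x : Equiv.Perm (Fin N)) : Prop := x * x = 1 ∧ ∀ p, x p ≠ p

/-- value of `x` at `i` as a natural number (junk `i` if out of range) -/
def av (x : Equiv.Perm (Fin N)) (i : ℕ) : ℕ := if h : i < N then (x ⟨i, h⟩ : ℕ) else i

lemma av_eq (x : Equiv.Perm (Fin N)) {i : ℕ} (h : i < N) : av x i = (x ⟨i, h⟩ : ℕ) :=
  dif_pos h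

lemma av_lt (x : Equiv.Perm (Fin N)) {i : ℕ} (h : i < N) : av x i < N := by
  rw [av_eq x h]; exact (x ⟨i, h⟩).isLt

lemma apply_eq_av (x : Equiv.Perm (Fin N)) {i : ℕ} (h : i < N) :
    x ⟨i, h⟩ = ⟨av x i, av_lt x h⟩ := by
  apply Fin.ext; exact (av_eq x h).symm

lemma av_av {x : Equiv.Perm (Fin N)} (hx : x * x = 1) {i : ℕ} (h : i < N) :
    av x (av x i) = i := by
  rw [av_eq x h, av_eq x (x ⟨i, h⟩).isLt]
  have : x (x ⟨i, h⟩) = ⟨i, h⟩ := by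
    have := congrArg (fun f : Equiv.Perm (Fin N) => f ⟨i, h⟩) hx
    simpa using this
  rw [show (⟨((x ⟨i,h⟩ : Fin N) : ℕ), _⟩ : Fin N) = x ⟨i,h⟩ from Fin.ext rfl, this]

lemma av_ne {x : Equiv.Perm (Fin N)} (hx : FI x) {i : ℕ} (h : i < N) : av x i ≠ i := by
  rw [av_eq x h]
  intro hc
  exact hx.2 ⟨i, h⟩ (Fin.ext hc)

lemma av_inj {x : Equiv.Perm (Fin N)} {i j : ℕ} (hi : i < N) (hj : j < N)
    (h : av x i = av x j) : i = j := by
  rw [av_eq x hi, av_eq x hj] at h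
  have := x.injective (Fin.ext h)
  exact congrArg Fin.val this

/-- relabelling map `i ↔ i+1` on ℕ -/
def rl (i j : ℕ) : ℕ := if j = i then i + 1 else if j = i + 1 then i else j

lemma rl_lt {i j : ℕ} (hi : i + 1 < N) (hj : j < N) : rl i j < N := by
  unfold rl; split_ifs <;> omega

lemma sP_apply_rl {i j : ℕ} (hi : i + 1 < N) (hj : j < N) :
    sP N i ⟨j, hj⟩ = ⟨rl i j, rl_lt hi hj⟩ := by
  apply Fin.ext
  rw [sP_val hi]
  rfl

lemma av_conj {i j : ℕ} (hi : i + 1 < N) (x : Equiv.Perm (Fin N)) (hj : j < N) :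
    av (sP N i * x * sP N i) j = rl i (av x (rl i j)) := by
  rw [av_eq _ hj]
  show ((sP N i) ((x) ((sP N i) ⟨j, hj⟩)) : ℕ) = _
  rw [sP_apply_rl hi hj, apply_eq_av x (rl_lt hi hj), sP_apply_rl hi (av_lt x (rl_lt hi hj))]

lemma FI_conj {x : Equiv.Perm (Fin N)} (hx : FI x) {i : ℕ} :
    FI (sP N i * x * sP N i) := by
  constructor
  · have : (sP N i * x * sP N i) * (sP N i * x * sP N i)
        = sP N i * (x * (sP N i * sP N i) * x) * sP N i := by group
    rw [this, sP_mul_self, mul_one, hx.1, mul_one, sP_mul_self]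
  · intro p hp
    have := congrArg (sP N i) hp
    rw [show sP N i ((sP N i * x * sP N i) p) = x (sP N i p) by
      simp [Equiv.Perm.mul_apply, sP_sP]] at this
    exact hx.2 (sP N i p) this

/-- ascent position: conjugation strictly raises -/
def Asc (x : Equiv.Perm (Fin N)) (i : ℕ) : Prop := i + 1 < N ∧ av x i < av x (i + 1)

/-- strippable descent -/
def St (x : Equiv.Perm (Fin N)) (i : ℕ) : Prop :=
  i + 1 < N ∧ av x (i + 1) < av x i ∧ av x i ≠ i + 1

lemma asc_vals {x : Equiv.Perm (Fin N)} (hx : FI x) {i : ℕ} (ha : Asc x i) :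
    av x i ≠ i ∧ av x i ≠ i + 1 ∧ av x (i + 1) ≠ i ∧ av x (i + 1) ≠ i + 1 := by
  obtain ⟨hi, hlt⟩ := ha
  have h1 : av x i ≠ i := av_ne hx (Nat.lt_of_succ_lt hi)
  have h2 : av x (i + 1) ≠ i + 1 := av_ne hx hi
  refine ⟨h1, ?_, ?_, h2⟩
  · intro hc
    have := av_av hx.1 (Nat.lt_of_succ_lt hi)
    rw [hc] at this
    omega
  · intro hc
    have := av_av hx.1 hi
    rw [hc] at this
    omega

lemma lenP_conj_asc {x : Equiv.Perm (Fin N)} (hx : FI x) {i : ℕ} (ha : Asc x i) :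
    lenP (sP N i * x * sP N i) = lenP x + 2 := by
  obtain ⟨hi, hlt⟩ := ha
  obtain ⟨h1, h2, h3, h4⟩ := asc_vals hx ⟨hi, hlt⟩
  have e1 : lenP (x * sP N i) = lenP x + 1 := by
    apply lenP_mul_sP_of_lt hi x
    rw [Fin.lt_iff_val_lt_val, ← av_eq x (Nat.lt_of_succ_lt hi), ← av_eq x hi]
    exact hlt
  have e2 : lenP (sP N i * x * sP N i) = lenP (sP N i * x) + 1 := by
    apply lenP_mul_sP_of_lt hi (sP N i * x)
    simp only [Equiv.Perm.mul_apply]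
    rw [apply_eq_av x (Nat.lt_of_succ_lt hi), apply_eq_av x hi,
      sP_apply_rl hi (av_lt x (Nat.lt_of_succ_lt hi)), sP_apply_rl hi (av_lt x hi),
      Fin.lt_iff_val_lt_val]
    show rl i (av x i) < rl i (av x (i+1))
    have l1 := av_lt x (Nat.lt_of_succ_lt hi)
    have l2 := av_lt x hi
    unfold rl
    split_ifs <;> omega
  have e3 : lenP (sP N i * x) = lenP (x * sP N i) := by
    have : sP N i * x = (x * sP N i)⁻¹ := by
      rw [mul_inv_rev]
      have hxi : x⁻¹ = x := inv_eq_of_mul_eq_one_right hx.1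
      have hsi : (sP N i)⁻¹ = sP N i := inv_eq_of_mul_eq_one_right (sP_mul_self i)
      rw [hxi, hsi]
    rw [this, lenP_inv]
  omega

lemma conj_ne_asc {x : Equiv.Perm (Fin N)} (hx : FI x) {i : ℕ} (ha : Asc x i) :
    sP N i * x ≠ x * sP N i := by
  obtain ⟨hi, hlt⟩ := ha
  obtain ⟨h1, h2, h3, h4⟩ := asc_vals hx ⟨hi, hlt⟩
  intro hc
  have hlt' : av x i < N := av_lt x (Nat.lt_of_succ_lt hi)
  have := congrArg (fun f : Equiv.Perm (Fin N) => f ⟨av x i, hlt'⟩) hc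
  simp only [Equiv.Perm.mul_apply] at this
  -- LHS: sP (x (x i)) = sP i = i+1 ; RHS: x (sP (x i)) = x (x i) = i
  have hxx : x ⟨av x i, hlt'⟩ = ⟨i, Nat.lt_of_succ_lt hi⟩ := by
    rw [apply_eq_av x hlt']
    exact Fin.ext (av_av hx.1 (Nat.lt_of_succ_lt hi))
  rw [hxx, sP_apply_left hi, sP_apply_other hi _ h1 h2, hxx] at this
  have : (⟨i+1, hi⟩ : Fin N) = ⟨i, Nat.lt_of_succ_lt hi⟩ := this
  simpa using congrArg Fin.val this

lemma iStep_eq_of_ge {x : Equiv.Perm (Fin N)} {i : ℕ} (h : ¬ i + 1 < N) :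
    iStep x i = x := by
  unfold iStep
  rw [sP_eq_one h]
  simp

lemma iStep_asc {x : Equiv.Perm (Fin N)} (hx : FI x) {i : ℕ} (ha : Asc x i) :
    iStep x i = sP N i * x * sP N i := by
  unfold iStep
  obtain ⟨hi, hlt⟩ := ha
  have e1 : lenP (x * sP N i) = lenP x + 1 := by
    apply lenP_mul_sP_of_lt hi x
    rw [Fin.lt_iff_val_lt_val, ← av_eq x (Nat.lt_of_succ_lt hi), ← av_eq x hi]
    exact hlt
  rw [if_neg (by omega), if_neg (conj_ne_asc hx ⟨hi, hlt⟩)]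

lemma iStep_desc {x : Equiv.Perm (Fin N)} {i : ℕ} (hi : i + 1 < N)
    (hgt : av x (i + 1) < av x i) : iStep x i = x := by
  unfold iStep
  have e1 : lenP (x * sP N i) + 1 = lenP x := by
    apply lenP_mul_sP_of_gt hi x
    rw [Fin.lt_iff_val_lt_val, ← av_eq x (Nat.lt_of_succ_lt hi), ← av_eq x hi]
    exact hgt
  rw [if_pos (by omega)]

lemma iStep_not_asc {x : Equiv.Perm (Fin N)} (hx : FI x) {i : ℕ} (h : ¬ Asc x i) :
    iStep x i = x := by
  by_cases hi : i + 1 < N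
  · have : av x (i+1) ≠ av x i := fun hc => by
      have := av_inj hi (Nat.lt_of_succ_lt hi) hc; omega
    have hgt : av x (i + 1) < av x i := by
      rcases Nat.lt_or_ge (av x (i+1)) (av x i) with hl | hg
      · exact hl
      · exact absurd ⟨hi, lt_of_le_of_ne hg (Ne.symm this)⟩ h
    exact iStep_desc hi hgt
  · exact iStep_eq_of_ge hi

lemma FI_iStep {x : Equiv.Perm (Fin N)} (hx : FI x) (i : ℕ) : FI (iStep x i) := by
  by_cases ha : Asc x i
  · rw [iStep_asc hx ha]; exact FI_conj hx
  · rw [iStep_not_asc hx ha]; exact hx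

lemma lenP_iStep_le {x : Equiv.Perm (Fin N)} (hx : FI x) (i : ℕ) :
    lenP (iStep x i) ≤ lenP x + 2 := by
  by_cases ha : Asc x i
  · rw [iStep_asc hx ha, lenP_conj_asc hx ha]
  · rw [iStep_not_asc hx ha]; omega

lemma lenP_iStep_asc {x : Equiv.Perm (Fin N)} (hx : FI x) {i : ℕ} (ha : Asc x i) :
    lenP (iStep x i) = lenP x + 2 := by
  rw [iStep_asc hx ha, lenP_conj_asc hx ha]

end Fpf

namespace Fpf
open Equiv Finset

/-- wfpf pattern value -/
def pv (k : ℕ) : ℕ := if k % 2 = 0 then k + 1 else k - 1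

lemma wfpf_aux (n : ℕ) : ∀ (m : ℕ), m ≤ n → ∀ (p : Fin (2*n)),
    ((((List.range m).map (fun i => sP (2*n) (2*i))).prod p : Fin (2*n)) : ℕ) =
      if (p : ℕ) < 2*m then pv (p : ℕ) else (p : ℕ) := by
  intro m
  induction m with
  | zero => intro _ p; simp
  | succ m ih =>
    intro hm p
    have hm' : m ≤ n := Nat.le_of_succ_le hm
    have h2m : 2*m + 1 < 2*n := by omega
    rw [List.range_succ, List.map_append, List.prod_append]
    simp only [List.map_cons, List.map_nil, List.prod_cons, List.prod_nil, mul_one]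
    rw [Equiv.Perm.mul_apply]
    rcases Nat.lt_trichotomy (p : ℕ) (2*m) with hp | hp | hp
    · rw [sP_apply_other h2m p (by omega) (by omega), ih hm' p, if_pos hp, if_pos (by omega)]
    · have hpe : p = ⟨2*m, by omega⟩ := Fin.ext hp
      rw [hpe, sP_apply_left h2m, ih hm' _]
      simp only [Fin.val_mk]
      rw [if_neg (show ¬(2*m+1 < 2*m) by omega), if_pos (show 2*m < 2*(m+1) by omega)]
      unfold pv
      split_ifs <;> omega
    · rcases Nat.lt_or_ge (2*m + 1) (p : ℕ) with hp2 | hp2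
      · rw [sP_apply_other h2m p (by omega) (by omega), ih hm' p, if_neg (by omega),
          if_neg (by omega)]
      · have hpv : (p : ℕ) = 2*m+1 := by omega
        have hpe : p = ⟨2*m+1, h2m⟩ := Fin.ext hpv
        rw [hpe, sP_apply_right h2m, ih hm' _]
        simp only [Fin.val_mk]
        rw [if_neg (show ¬(2*m < 2*m) by omega), if_pos (show 2*m+1 < 2*(m+1) by omega)]
        unfold pv
        split_ifs <;> omega
  
lemma av_wfpf {n : ℕ} {k : ℕ} (hk : k < 2*n) : av (wfpfP n) k = pv k := by
  rw [av_eq _ hk]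
  unfold wfpfP
  rw [wfpf_aux n n le_rfl ⟨k, hk⟩]
  simp [hk]

lemma FI_wfpf {n : ℕ} : FI (wfpfP n) := by
  have key : ∀ k, k < 2*n → av (wfpfP n) k = pv k := fun k hk => av_wfpf hk
  constructor
  · apply Equiv.ext
    intro p
    have h1 := key p p.isLt
    rw [av_eq _ p.isLt] at h1
    have h2 := key (pv p) (by unfold pv; split_ifs <;> omega)
    rw [av_eq _ (by unfold pv; split_ifs <;> omega : pv (p:ℕ) < 2*n)] at h2
    simp only [Equiv.Perm.mul_apply, Equiv.Perm.one_apply]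
    apply Fin.ext
    rw [show wfpfP n p = ⟨pv p, by unfold pv; split_ifs <;> omega⟩ from Fin.ext h1, h2]
    show pv (pv (p : ℕ)) = (p : ℕ)
    unfold pv
    have := p.isLt
    split_ifs <;> omega
  · intro p hp
    have h1 := key p p.isLt
    rw [av_eq _ p.isLt, hp] at h1
    unfold pv at h1
    split_ifs at h1 <;> omega

lemma no_st_wfpf {n : ℕ} (i : ℕ) : ¬ St (wfpfP n) i := by
  rintro ⟨hi, hlt, hne⟩
  rw [av_wfpf (Nat.lt_of_succ_lt hi), av_wfpf hi] at hlt
  rw [av_wfpf (Nat.lt_of_succ_lt hi)] at hne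
  unfold pv at hlt hne
  split_ifs at hlt hne <;> omega

lemma lenP_wfpf {n : ℕ} : lenP (wfpfP n) = n := by
  rw [lenP_eq_card]
  conv_rhs => rw [← Finset.card_range n]
  apply Finset.card_bij (fun pq _ => ((pq.1 : Fin (2*n)) : ℕ) / 2)
  · rintro ⟨p, q⟩ hpq
    rw [mem_invSet] at hpq
    obtain ⟨h1, h2⟩ := hpq
    simp only at h1 h2 ⊢
    have hp := p.isLt
    have hq := q.isLt
    have e1 : ((wfpfP n) q : ℕ) = pv q := by
      rw [← av_eq _ q.isLt, av_wfpf q.isLt]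
    have e2 : ((wfpfP n) p : ℕ) = pv p := by
      rw [← av_eq _ p.isLt, av_wfpf p.isLt]
    have h2' : pv (q:ℕ) < pv (p:ℕ) := by
      rw [← e1, ← e2]; exact h2
    have h1' : (p:ℕ) < (q:ℕ) := h1
    rw [Finset.mem_range]
    unfold pv at h2'
    split_ifs at h2' <;> omega
  · rintro ⟨p, q⟩ hpq ⟨p', q'⟩ hpq' heq
    rw [mem_invSet] at hpq hpq'
    obtain ⟨h1, h2⟩ := hpq
    obtain ⟨h1', h2'⟩ := hpq'
    simp only at h1 h2 h1' h2' heq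
    have ep : ∀ (r s : Fin (2*n)), (r:ℕ) < (s:ℕ) → pv (s:ℕ) < pv (r:ℕ) →
        (s:ℕ) = (r:ℕ)+1 ∧ (r:ℕ) % 2 = 0 := by
      intro r s hrs hpv
      unfold pv at hpv
      split_ifs at hpv <;> omega
    have c1 := ep p q h1 (by
      rw [show pv (q:ℕ) = ((wfpfP n) q : ℕ) from (by rw [← av_eq _ q.isLt, av_wfpf q.isLt]),
        show pv (p:ℕ) = ((wfpfP n) p : ℕ) from (by rw [← av_eq _ p.isLt, av_wfpf p.isLt])]
      exact h2)
    have c2 := ep p' q' h1' (by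
      rw [show pv (q':ℕ) = ((wfpfP n) q' : ℕ) from (by rw [← av_eq _ q'.isLt, av_wfpf q'.isLt]),
        show pv (p':ℕ) = ((wfpfP n) p' : ℕ) from (by rw [← av_eq _ p'.isLt, av_wfpf p'.isLt])]
      exact h2')
    have : (p:ℕ) = (p':ℕ) := by omega
    have hq : (q:ℕ) = (q':ℕ) := by omega
    exact Prod.ext (Fin.ext this) (Fin.ext hq)
  · intro j hj
    rw [Finset.mem_range] at hj
    have h1 : 2*j < 2*n := by omega
    have h2 : 2*j+1 < 2*n := by omega
    refine ⟨(⟨2*j, h1⟩, ⟨2*j+1, h2⟩), ?_, by show (2*j)/2 = j; omega⟩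
    rw [mem_invSet]
    refine ⟨by rw [Fin.lt_iff_val_lt_val]; simp, ?_⟩
    show (wfpfP n) ⟨2*j+1, h2⟩ < (wfpfP n) ⟨2*j, h1⟩
    rw [Fin.lt_iff_val_lt_val]
    show ((wfpfP n) ⟨2*j+1, h2⟩ : ℕ) < ((wfpfP n) ⟨2*j, h1⟩ : ℕ)
    rw [← av_eq _ h2, ← av_eq _ h1, av_wfpf h2, av_wfpf h1]
    unfold pv; split_ifs <;> omega

/-- rigidity: a fixed-point-free involution with no strippable descents is `wfpfP`. -/
lemma rigid1 {n : ℕ} {x : Equiv.Perm (Fin (2*n))} (hx : FI x) (h : ∀ i, ¬ St x i) :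
    x = wfpfP n := by
  have key : ∀ k, k < 2*n → av x k = pv k := by
    intro k
    induction k using Nat.strong_induction_on with
    | _ k ih =>
      intro hk
      rcases Nat.even_or_odd k with ⟨j, hj⟩ | ⟨j, hj⟩
      · -- k even : show av x k = k + 1
        have hne : av x k ≠ k := av_ne hx hk
        have hgt : av x k > k := by
          rcases Nat.lt_or_ge (av x k) k with hl | hg
          · exfalso
            have h2 := av_av hx.1 hk
            have h3 := ih (av x k) hl (lt_trans hl hk)
            unfold pv at h3
            split_ifs at h3 <;> omega
          · omega
        by_cases hd : av x k = k + 1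
        · rw [hd]; unfold pv; rw [if_pos (by omega)]
        · exfalso
          set d := av x k with hdd
          have hd2 : d ≥ k + 2 := by omega
          have hdlt : d < 2*n := av_lt x hk
          have havd : av x d = k := av_av hx.1 hk
          have hgt2 : av x (d-1) > k := by
            rcases Nat.lt_or_ge (av x (d-1)) k with hl | hg
            · exfalso
              have h3 := ih (av x (d-1)) (by omega) (by omega)
              have h4 := av_av hx.1 (show d - 1 < 2*n by omega)
              rw [h3] at h4
              unfold pv at h4 h3
              split_ifs at h4 <;> omega
            · rcases Nat.lt_or_ge k (av x (d-1)) with hl | hg2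
              · exact hl
              · exfalso
                have : av x (d-1) = k := by omega
                rw [← havd] at this
                have := av_inj (show d-1 < 2*n by omega) hdlt this
                omega
          apply h (d-1)
          refine ⟨by omega, ?_, ?_⟩
          · rw [show d - 1 + 1 = d by omega, havd]; exact hgt2
          · intro hc
            rw [show d - 1 + 1 = d by omega] at hc
            have h5 : av x (av x (d-1)) = d - 1 := av_av hx.1 (by omega)
            rw [hc, havd] at h5
            omega
      · -- k odd : use k - 1
        have hk1 : k - 1 < 2*n := by omega
        have e1 : av x (k-1) = k := by
          have := ih (k-1) (by omega) hk1
          unfold pv at this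
          rw [if_pos (by omega)] at this
          omega
        have := av_av hx.1 hk1
        rw [e1] at this
        rw [this]
        unfold pv
        rw [if_neg (by omega)]
  apply Equiv.ext
  intro p
  apply Fin.ext
  rw [← av_eq x p.isLt, ← av_eq (wfpfP n) p.isLt, key p p.isLt, av_wfpf p.isLt]

end Fpf

namespace Fpf
open Equiv Finset

variable {N : ℕ}

/-- conjugation by the adjacent swap -/
def strip (i : ℕ) (x : Equiv.Perm (Fin N)) : Equiv.Perm (Fin N) := sP N i * x * sP N i

lemma strip_def (i : ℕ) (x : Equiv.Perm (Fin N)) : strip i x = sP N i * x * sP N i := rfl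

lemma av_strip {i j : ℕ} (hi : i + 1 < N) (x : Equiv.Perm (Fin N)) (hj : j < N) :
    av (strip i x) j = rl i (av x (rl i j)) := av_conj hi x hj

lemma FI_strip {x : Equiv.Perm (Fin N)} (hx : FI x) {i : ℕ} : FI (strip i x) := FI_conj hx

lemma iStep_asc' {x : Equiv.Perm (Fin N)} (hx : FI x) {i : ℕ} (ha : Asc x i) :
    iStep x i = strip i x := iStep_asc hx ha

/-- strict word: every step is a strict ascent -/
def SW : Equiv.Perm (Fin N) → List ℕ → Prop
  | _, [] => True
  | x, i :: t => Asc x i ∧ SW (iStep x i) t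

@[simp] lemma SW_nil (x : Equiv.Perm (Fin N)) : SW x [] := trivial

lemma SW_cons {x : Equiv.Perm (Fin N)} {i : ℕ} {t : List ℕ} :
    SW x (i :: t) ↔ Asc x i ∧ SW (iStep x i) t := Iff.rfl

@[simp] lemma iWord_nil (x : Equiv.Perm (Fin N)) : iWord x [] = x := rfl

lemma iWord_cons (x : Equiv.Perm (Fin N)) (i : ℕ) (t : List ℕ) :
    iWord x (i :: t) = iWord (iStep x i) t := rfl

lemma iWord_append (x : Equiv.Perm (Fin N)) (l m : List ℕ) :
    iWord x (l ++ m) = iWord (iWord x l) m := List.foldl_append ..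

lemma iWord_snoc (x : Equiv.Perm (Fin N)) (l : List ℕ) (i : ℕ) :
    iWord x (l ++ [i]) = iStep (iWord x l) i := by
  rw [iWord_append]; rfl

lemma FI_iWord {x : Equiv.Perm (Fin N)} (hx : FI x) (l : List ℕ) : FI (iWord x l) := by
  induction l generalizing x with
  | nil => exact hx
  | cons i t ih => exact ih (FI_iStep hx i)

lemma SW_append {x : Equiv.Perm (Fin N)} {l m : List ℕ} :
    SW x (l ++ m) ↔ SW x l ∧ SW (iWord x l) m := by
  induction l generalizing x with
  | nil => simp [iWord_nil]
  | cons i t ih =>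
    rw [List.cons_append, SW_cons, SW_cons, iWord_cons, ih]
    tauto

lemma lenP_iWord_le {x : Equiv.Perm (Fin N)} (hx : FI x) (l : List ℕ) :
    lenP (iWord x l) ≤ lenP x + 2 * l.length := by
  induction l generalizing x with
  | nil => simp
  | cons i t ih =>
    rw [iWord_cons]
    calc lenP (iWord (iStep x i) t) ≤ lenP (iStep x i) + 2 * t.length :=
          ih (FI_iStep hx i)
      _ ≤ lenP x + 2 * (i :: t).length := by
          have := lenP_iStep_le hx i
          simp only [List.length_cons]
          omega

lemma lenP_iWord_SW {x : Equiv.Perm (Fin N)} (hx : FI x) {l : List ℕ} (hl : SW x l) :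
    lenP (iWord x l) = lenP x + 2 * l.length := by
  induction l generalizing x with
  | nil => simp
  | cons i t ih =>
    obtain ⟨ha, ht⟩ := hl
    rw [iWord_cons, ih (FI_iStep hx i) ht, lenP_iStep_asc hx ha]
    simp only [List.length_cons]
    omega

lemma shorten_of_not_SW {x : Equiv.Perm (Fin N)} (hx : FI x) {l : List ℕ} (h : ¬ SW x l) :
    ∃ l', iWord x l' = iWord x l ∧ l'.length + 1 = l.length := by
  induction l generalizing x with
  | nil => exact absurd (SW_nil x) h
  | cons i t ih =>
    by_cases ha : Asc x i
    · have ht : ¬ SW (iStep x i) t := fun hc => h ⟨ha, hc⟩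
      obtain ⟨t', h1, h2⟩ := ih (FI_iStep hx i) ht
      exact ⟨i :: t', by rw [iWord_cons, iWord_cons, h1], by simp [← h2]⟩
    · refine ⟨t, ?_, by simp⟩
      rw [iWord_cons, iStep_not_asc hx ha]

/-- the set of strict words from `x0` to `x` -/
def SWds (x0 x : Equiv.Perm (Fin N)) : Set (List ℕ) :=
  {l | SW x0 l ∧ iWord x0 l = x}

lemma invWords_eq_SWds {x0 x : Equiv.Perm (Fin N)} (hx0 : FI x0)
    (hne : (SWds x0 x).Nonempty) : InvWordsP N x0 x = SWds x0 x := by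
  obtain ⟨w, hw1, hw2⟩ := hne
  have hlen : ∀ l ∈ SWds x0 x, 2 * l.length + lenP x0 = lenP x := by
    rintro l ⟨h1, h2⟩
    have := lenP_iWord_SW hx0 h1
    rw [h2] at this
    omega
  apply Set.eq_of_subset_of_subset
  · rintro l ⟨h1, h2⟩
    have hsw : SW x0 l := by
      by_contra hc
      obtain ⟨l', e1, e2⟩ := shorten_of_not_SW hx0 hc
      have := h2 l' (by rw [e1, h1])
      omega
    exact ⟨hsw, h1⟩
  · rintro l ⟨h1, h2⟩
    refine ⟨h2, ?_⟩
    intro l' hl'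
    have e1 := hlen l ⟨h1, h2⟩
    have e2 : lenP (iWord x0 l') ≤ lenP x0 + 2 * l'.length := lenP_iWord_le hx0 l'
    rw [hl'] at e2
    omega

lemma st_vals {x : Equiv.Perm (Fin N)} (hx : FI x) {i : ℕ} (hs : St x i) :
    av x i ≠ i ∧ av x i ≠ i + 1 ∧ av x (i + 1) ≠ i ∧ av x (i + 1) ≠ i + 1 := by
  obtain ⟨hi, hlt, hne⟩ := hs
  refine ⟨av_ne hx (Nat.lt_of_succ_lt hi), hne, ?_, av_ne hx hi⟩
  intro hc
  have h2 := av_av hx.1 hi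
  rw [hc] at h2
  exact hne h2

lemma strip_facts {x : Equiv.Perm (Fin N)} (hx : FI x) {i : ℕ} (hs : St x i) :
    FI (strip i x) ∧ Asc (strip i x) i ∧ iStep (strip i x) i = x ∧
      lenP (strip i x) + 2 = lenP x := by
  obtain ⟨hi, hlt, hne⟩ := hs
  obtain ⟨v1, v2, v3, v4⟩ := st_vals hx ⟨hi, hlt, hne⟩
  have hFI : FI (strip i x) := FI_conj hx
  have havi : av (strip i x) i = av x (i+1) := by
    rw [strip, av_conj hi x (Nat.lt_of_succ_lt hi)]
    rw [show rl i i = i + 1 from if_pos rfl]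
    unfold rl
    rw [if_neg v3, if_neg v4]
  have havi1 : av (strip i x) (i+1) = av x i := by
    rw [strip, av_conj hi x hi]
    rw [show rl i (i+1) = i from by unfold rl; rw [if_neg (by omega), if_pos rfl]]
    unfold rl
    rw [if_neg v1, if_neg v2]
  have hasc : Asc (strip i x) i := ⟨hi, by rw [havi, havi1]; exact hlt⟩
  have histep : iStep (strip i x) i = x := by
    rw [iStep_asc hFI hasc, strip]
    calc sP N i * (sP N i * x * sP N i) * sP N i
        = (sP N i * sP N i) * x * (sP N i * sP N i) := by group
      _ = x := by rw [sP_mul_self]; simp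
  refine ⟨hFI, hasc, histep, ?_⟩
  have := lenP_iStep_asc hFI hasc
  rw [histep] at this
  omega

lemma asc_iStep_st {x : Equiv.Perm (Fin N)} (hx : FI x) {i : ℕ} (ha : Asc x i) :
    St (iStep x i) i ∧ strip i (iStep x i) = x := by
  obtain ⟨hi, hlt⟩ := ha
  obtain ⟨v1, v2, v3, v4⟩ := asc_vals hx ⟨hi, hlt⟩
  rw [iStep_asc hx ⟨hi, hlt⟩]
  have havi : av (sP N i * x * sP N i) i = av x (i+1) := by
    rw [av_conj hi x (Nat.lt_of_succ_lt hi)]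
    rw [show rl i i = i + 1 from if_pos rfl]
    unfold rl
    rw [if_neg v3, if_neg v4]
  have havi1 : av (sP N i * x * sP N i) (i+1) = av x i := by
    rw [av_conj hi x hi]
    rw [show rl i (i+1) = i from by unfold rl; rw [if_neg (by omega), if_pos rfl]]
    unfold rl
    rw [if_neg v1, if_neg v2]
  constructor
  · exact ⟨hi, by rw [havi, havi1]; exact hlt, by rw [havi]; exact v4⟩
  · rw [strip]
    calc sP N i * (sP N i * x * sP N i) * sP N i
        = (sP N i * sP N i) * x * (sP N i * sP N i) := by group
      _ = x := by rw [sP_mul_self]; simp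

lemma SWds_snoc {x0 x : Equiv.Perm (Fin N)} {l : List ℕ} {e : ℕ}
    (hx : FI x) (hs : St x e) (hl : l ∈ SWds x0 (strip e x)) : l ++ [e] ∈ SWds x0 x := by
  obtain ⟨h1, h2⟩ := hl
  obtain ⟨hFI, hasc, histep, _⟩ := strip_facts hx hs
  constructor
  · rw [SW_append, h2]
    exact ⟨h1, hasc, trivial⟩
  · rw [iWord_snoc, h2, histep]

lemma SWds_unsnoc {x0 x : Equiv.Perm (Fin N)} {l : List ℕ} {e : ℕ} (hx0 : FI x0)
    (hl : l ++ [e] ∈ SWds x0 x) : St x e ∧ l ∈ SWds x0 (strip e x) := by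
  obtain ⟨h1, h2⟩ := hl
  rw [SW_append] at h1
  obtain ⟨h1l, hasc, -⟩ := h1
  rw [iWord_snoc] at h2
  have hFIy : FI (iWord x0 l) := FI_iWord hx0 l
  obtain ⟨hst, hstrip⟩ := asc_iStep_st hFIy hasc
  rw [h2] at hst hstrip
  exact ⟨hst, ⟨h1l, hstrip.symm⟩⟩

/-- existence of a strict word to any fpf involution -/
lemma SWds_nonempty {n : ℕ} (x : Equiv.Perm (Fin (2*n))) (hx : FI x) :
    (SWds (wfpfP n) x).Nonempty := by
  generalize hL : lenP x = L
  induction L using Nat.strong_induction_on generalizing x with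
  | _ L ih =>
    by_cases hst : ∃ i, St x i
    · obtain ⟨i, hi⟩ := hst
      obtain ⟨hFI, hasc, histep, hlen⟩ := strip_facts hx hi
      obtain ⟨l, hl⟩ := ih (lenP (strip i x)) (by omega) (strip i x) hFI rfl
      exact ⟨l ++ [i], SWds_snoc hx hi hl⟩
    · push_neg at hst
      rw [rigid1 hx hst]
      exact ⟨[], trivial, rfl⟩

end Fpf

namespace Fpf
open Equiv Finset

variable {N : ℕ}

lemma rl_left (i : ℕ) : rl i i = i + 1 := if_pos rfl

lemma rl_right (i : ℕ) : rl i (i+1) = i := by unfold rl; rw [if_neg (by omega), if_pos rfl]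

lemma rl_other {i j : ℕ} (h1 : j ≠ i) (h2 : j ≠ i + 1) : rl i j = j := by
  unfold rl; rw [if_neg h1, if_neg h2]

lemma rl_lt_rl {i a b : ℕ} (hab : a < b) (h : ¬(a = i ∧ b = i + 1)) : rl i a < rl i b := by
  unfold rl; split_ifs <;> omega

lemma sP_comm {i j : ℕ} (hij : i + 2 ≤ j) : sP N i * sP N j = sP N j * sP N i := by
  by_cases hiN : i + 1 < N
  · by_cases hjN : j + 1 < N
    · apply Equiv.ext
      intro p
      apply Fin.ext
      simp only [Equiv.Perm.mul_apply]
      rw [sP_val hiN, sP_val hjN, sP_val hjN, sP_val hiN]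
      have := p.isLt
      split_ifs <;> omega
    · rw [sP_eq_one hjN, mul_one, one_mul]
  · rw [sP_eq_one hiN, mul_one, one_mul]

lemma swap_braid {α : Type*} [DecidableEq α] {a b c : α} (hab : a ≠ b) (hbc : b ≠ c)
    (hac : a ≠ c) :
    Equiv.swap a b * Equiv.swap b c * Equiv.swap a b
      = Equiv.swap b c * Equiv.swap a b * Equiv.swap b c := by
  have l1 : Equiv.swap a b * Equiv.swap b c * (Equiv.swap a b)⁻¹ = Equiv.swap a c := by
    rw [← Equiv.swap_apply_apply, Equiv.swap_apply_right,
      Equiv.swap_apply_of_ne_of_ne (Ne.symm hac) (Ne.symm hbc)]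
  have l2 : Equiv.swap b c * Equiv.swap a b * (Equiv.swap b c)⁻¹ = Equiv.swap a c := by
    rw [← Equiv.swap_apply_apply, Equiv.swap_apply_of_ne_of_ne hab hac,
      Equiv.swap_apply_left]
  rw [Equiv.swap_inv] at l1 l2
  exact l1.trans l2.symm

lemma sP_braid {i : ℕ} (h : i + 2 < N) :
    sP N i * sP N (i+1) * sP N i = sP N (i+1) * sP N i * sP N (i+1) := by
  have h1 : i + 1 < N := by omega
  have e1 : sP N i = Equiv.swap (⟨i, by omega⟩ : Fin N) ⟨i+1, h1⟩ := sP_def h1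
  have e2 : sP N (i+1) = Equiv.swap (⟨i+1, h1⟩ : Fin N) ⟨i+2, by omega⟩ := by
    rw [sP_def (show (i+1)+1 < N from h)]
  rw [e1, e2]
  apply swap_braid <;>
    (intro hc; have := congrArg Fin.val hc; simp only [Fin.val_mk] at this; omega)

lemma perm_eq_of_av {x y : Equiv.Perm (Fin N)} (h : ∀ k, k < N → av x k = av y k) :
    x = y := by
  apply Equiv.ext
  intro p
  apply Fin.ext
  have h2 := h (p : ℕ) p.isLt
  rw [av_eq x p.isLt, av_eq y p.isLt] at h2
  simpa using h2

/-- if `x` matches `{i,i+1}` with `{j,j+1}` (in either of the two ways), conjugating by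
`s_i` equals conjugating by `s_j`. -/
lemma strip_eq_strip {x : Equiv.Perm (Fin N)} (hx : FI x) {i j : ℕ}
    (hi : i + 1 < N) (hj : j + 1 < N) (hij : i + 2 ≤ j)
    (hl : av x i = j ∧ av x (i+1) = j+1 ∨ av x i = j+1 ∧ av x (i+1) = j) :
    strip i x = strip j x := by
  apply perm_eq_of_av
  intro k hk
  rw [av_strip hi x hk, av_strip hj x hk]
  rcases hl with ⟨h1, h2⟩ | ⟨h1, h2⟩
  · have h3 : av x j = i := by rw [← h1]; exact av_av hx.1 (by omega)
    have h4 : av x (j+1) = i+1 := by rw [← h2]; exact av_av hx.1 (by omega)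
    by_cases hki : k = i
    · rw [hki, rl_left i, h2, rl_other (show j+1 ≠ i by omega) (show j+1 ≠ i+1 by omega),
        rl_other (show i ≠ j by omega) (show i ≠ j+1 by omega), h1, rl_left j]
    · by_cases hki1 : k = i + 1
      · rw [hki1, rl_right i, h1,
          rl_other (show j ≠ i by omega) (show j ≠ i+1 by omega),
          rl_other (show i+1 ≠ j by omega) (show i+1 ≠ j+1 by omega), h2, rl_right j]
      · by_cases hkj : k = j
        · rw [hkj, rl_other (show j ≠ i by omega) (show j ≠ i+1 by omega), h3, rl_left i,
            rl_left j, h4, rl_other (show i+1 ≠ j by omega) (show i+1 ≠ j+1 by omega)]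
        · by_cases hkj1 : k = j + 1
          · rw [hkj1, rl_other (show j+1 ≠ i by omega) (show j+1 ≠ i+1 by omega), h4,
              rl_right i, rl_right j, h3,
              rl_other (show i ≠ j by omega) (show i ≠ j+1 by omega)]
          · have hvi : av x k ≠ i := fun hc => by
              have h5 := av_av hx.1 hk
              rw [hc, h1] at h5
              exact hkj h5.symm
            have hvi1 : av x k ≠ i + 1 := fun hc => by
              have h5 := av_av hx.1 hk
              rw [hc, h2] at h5
              exact hkj1 h5.symm
            have hvj : av x k ≠ j := fun hc => by
              have h5 := av_av hx.1 hk
              rw [hc, h3] at h5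
              exact hki h5.symm
            have hvj1 : av x k ≠ j + 1 := fun hc => by
              have h5 := av_av hx.1 hk
              rw [hc, h4] at h5
              exact hki1 h5.symm
            rw [rl_other hki hki1, rl_other hkj hkj1, rl_other hvi hvi1, rl_other hvj hvj1]
  · have h3 : av x (j+1) = i := by rw [← h1]; exact av_av hx.1 (by omega)
    have h4 : av x j = i+1 := by rw [← h2]; exact av_av hx.1 (by omega)
    by_cases hki : k = i
    · rw [hki, rl_left i, h2, rl_other (show j ≠ i by omega) (show j ≠ i+1 by omega),
        rl_other (show i ≠ j by omega) (show i ≠ j+1 by omega), h1, rl_right j]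
    · by_cases hki1 : k = i + 1
      · rw [hki1, rl_right i, h1,
          rl_other (show j+1 ≠ i by omega) (show j+1 ≠ i+1 by omega),
          rl_other (show i+1 ≠ j by omega) (show i+1 ≠ j+1 by omega), h2, rl_left j]
      · by_cases hkj : k = j
        · rw [hkj, rl_other (show j ≠ i by omega) (show j ≠ i+1 by omega), h4, rl_right i,
            rl_left j, h3, rl_other (show i ≠ j by omega) (show i ≠ j+1 by omega)]
        · by_cases hkj1 : k = j + 1
          · rw [hkj1, rl_other (show j+1 ≠ i by omega) (show j+1 ≠ i+1 by omega), h3,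
              rl_left i, rl_right j, h4,
              rl_other (show i+1 ≠ j by omega) (show i+1 ≠ j+1 by omega)]
          · have hvi : av x k ≠ i := fun hc => by
              have h5 := av_av hx.1 hk
              rw [hc, h1] at h5
              exact hkj1 h5.symm
            have hvi1 : av x k ≠ i + 1 := fun hc => by
              have h5 := av_av hx.1 hk
              rw [hc, h2] at h5
              exact hkj h5.symm
            have hvj : av x k ≠ j := fun hc => by
              have h5 := av_av hx.1 hk
              rw [hc, h4] at h5
              exact hki1 h5.symm
            have hvj1 : av x k ≠ j + 1 := fun hc => by
              have h5 := av_av hx.1 hk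
              rw [hc, h3] at h5
              exact hki h5.symm
            rw [rl_other hki hki1, rl_other hkj hkj1, rl_other hvi hvi1, rl_other hvj hvj1]

lemma not_asc_of_desc {y : Equiv.Perm (Fin N)} {j : ℕ} (h : av y (j+1) < av y j) :
    ¬ Asc y j := fun ⟨_, hlt⟩ => by omega

lemma desc_of_not_asc {y : Equiv.Perm (Fin N)} {j : ℕ} (hj : j + 1 < N) (h : ¬ Asc y j) :
    av y (j+1) < av y j := by
  have hne : av y (j+1) ≠ av y j := fun hc => by
    have := av_inj hj (by omega) hc; omega
  rcases Nat.lt_or_ge (av y (j+1)) (av y j) with h' | h'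
  · exact h'
  · exact absurd ⟨hj, by omega⟩ h

lemma iStep_comm {y : Equiv.Perm (Fin N)} (hy : FI y) {i j : ℕ} (hij : i + 2 ≤ j) :
    iStep (iStep y i) j = iStep (iStep y j) i := by
  by_cases hjN : j + 1 < N
  swap
  · rw [iStep_eq_of_ge hjN, iStep_eq_of_ge hjN]
  have hiN : i + 1 < N := by omega
  by_cases hA : Asc y i <;> by_cases hB : Asc y j
  · -- both ascents
    rw [iStep_asc' hy hA, iStep_asc' hy hB]
    by_cases hlink : av y i = j ∧ av y (i+1) = j+1
    · -- linked case: both sides stay after first step, and strips agree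
      have havj : av y j = i := by rw [← hlink.1]; exact av_av hy.1 (by omega)
      have havj1 : av y (j+1) = i + 1 := by rw [← hlink.2]; exact av_av hy.1 (by omega)
      have d1 : av (strip i y) (j+1) < av (strip i y) j := by
        rw [av_strip hiN y hjN, av_strip hiN y (by omega : j < N),
          rl_other (show j+1 ≠ i by omega) (show j+1 ≠ i+1 by omega),
          rl_other (show j ≠ i by omega) (show j ≠ i+1 by omega), havj, havj1,
          rl_left, rl_right]
        omega
      have d2 : av (strip j y) (i+1) < av (strip j y) i := by
        rw [av_strip hjN y (by omega : i+1 < N), av_strip hjN y (by omega : i < N),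
          rl_other (show i+1 ≠ j by omega) (show i+1 ≠ j+1 by omega),
          rl_other (show i ≠ j by omega) (show i ≠ j+1 by omega), hlink.1, hlink.2,
          rl_left, rl_right]
        omega
      rw [iStep_desc hjN d1, iStep_desc hiN d2]
      exact strip_eq_strip hy hiN hjN hij (Or.inl hlink)
    · -- generic case
      have hnl2 : ¬(av y j = i ∧ av y (j+1) = i+1) := by
        rintro ⟨h1, h2⟩
        apply hlink
        constructor
        · rw [← h1]; exact av_av hy.1 (by omega)
        · rw [← h2]; exact av_av hy.1 (by omega)
      have a1 : Asc (strip i y) j := by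
        refine ⟨hjN, ?_⟩
        rw [av_strip hiN y (by omega : j < N), av_strip hiN y hjN,
          rl_other (show j ≠ i by omega) (show j ≠ i+1 by omega),
          rl_other (show j+1 ≠ i by omega) (show j+1 ≠ i+1 by omega)]
        exact rl_lt_rl hB.2 (fun hc => hnl2 ⟨hc.1, hc.2⟩)
      have a2 : Asc (strip j y) i := by
        refine ⟨hiN, ?_⟩
        rw [av_strip hjN y (by omega : i < N), av_strip hjN y (by omega : i+1 < N),
          rl_other (show i ≠ j by omega) (show i ≠ j+1 by omega),
          rl_other (show i+1 ≠ j by omega) (show i+1 ≠ j+1 by omega)]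
        exact rl_lt_rl hA.2 (fun hc => hlink ⟨hc.1, hc.2⟩)
      rw [iStep_asc' (FI_strip hy) a1, iStep_asc' (FI_strip hy) a2]
      rw [strip_def, strip_def, strip_def, strip_def]
      rw [show sP N j * (sP N i * y * sP N i) * sP N j
          = (sP N j * sP N i) * y * (sP N i * sP N j) by group,
        show sP N i * (sP N j * y * sP N j) * sP N i
          = (sP N i * sP N j) * y * (sP N j * sP N i) by group,
        sP_comm hij]
  · -- Asc i, not Asc j
    have hgt : av y (j+1) < av y j := desc_of_not_asc hjN hB
    rw [iStep_asc' hy hA, iStep_not_asc hy hB]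
    have hnd : ¬(av y (j+1) = i ∧ av y j = i+1) := by
      rintro ⟨h1, h2⟩
      have e1 : av y i = j + 1 := by rw [← h1]; exact av_av hy.1 (by omega)
      have e2 : av y (i+1) = j := by rw [← h2]; exact av_av hy.1 (by omega)
      have := hA.2
      omega
    have d1 : av (strip i y) (j+1) < av (strip i y) j := by
      rw [av_strip hiN y (by omega : j < N), av_strip hiN y hjN,
        rl_other (show j ≠ i by omega) (show j ≠ i+1 by omega),
        rl_other (show j+1 ≠ i by omega) (show j+1 ≠ i+1 by omega)]
      exact rl_lt_rl hgt hnd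
    rw [iStep_desc hjN d1, iStep_asc' hy hA]
  · -- not Asc i, Asc j
    have hgt : av y (i+1) < av y i := desc_of_not_asc hiN hA
    rw [iStep_not_asc hy hA, iStep_asc' hy hB]
    have hnd : ¬(av y (i+1) = j ∧ av y i = j+1) := by
      rintro ⟨h1, h2⟩
      have e1 : av y j = i + 1 := by rw [← h1]; exact av_av hy.1 (by omega)
      have e2 : av y (j+1) = i := by rw [← h2]; exact av_av hy.1 (by omega)
      have := hB.2
      omega
    have d1 : av (strip j y) (i+1) < av (strip j y) i := by
      rw [av_strip hjN y (by omega : i < N), av_strip hjN y (by omega : i+1 < N),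
        rl_other (show i ≠ j by omega) (show i ≠ j+1 by omega),
        rl_other (show i+1 ≠ j by omega) (show i+1 ≠ j+1 by omega)]
      exact rl_lt_rl hgt hnd
    rw [iStep_desc hiN d1]
  · rw [iStep_not_asc hy hA, iStep_not_asc hy hB, iStep_not_asc hy hA]

end Fpf

namespace Fpf
open Equiv Finset

variable {N : ℕ}

lemma rlA (i : ℕ) : rl (i+1) i = i := by unfold rl; split_ifs <;> omega
lemma rlB (i : ℕ) : rl (i+1) (i+1) = i + 2 := by unfold rl; split_ifs <;> omega
lemma rlC (i : ℕ) : rl (i+1) (i+2) = i + 1 := by unfold rl; split_ifs <;> omega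
lemma rlD (i : ℕ) : rl i (i+2) = i + 2 := by unfold rl; split_ifs <;> omega

lemma iStep_idem {y : Equiv.Perm (Fin N)} (hy : FI y) (i : ℕ) :
    iStep (iStep y i) i = iStep y i := by
  by_cases hA : Asc y i
  · obtain ⟨hst, -⟩ := asc_iStep_st hy hA
    exact iStep_desc hst.1 hst.2.1
  · rw [iStep_not_asc hy hA, iStep_not_asc hy hA]

/-- The braid relation for the conjugation action. -/
lemma iStep_braid {y : Equiv.Perm (Fin N)} (hy : FI y) (i : ℕ) :
    iStep (iStep (iStep y i) (i+1)) i = iStep (iStep (iStep y (i+1)) i) (i+1) := by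
  by_cases hi2 : i + 2 < N
  swap
  · by_cases hi1 : i + 1 < N
    · have hge : ¬ (i + 1) + 1 < N := by omega
      simp only [iStep_eq_of_ge hge]
      exact iStep_idem hy i
    · have hge : ¬ (i + 1) + 1 < N := by omega
      simp only [iStep_eq_of_ge hge, iStep_eq_of_ge hi1]
  have hi1 : i + 1 < N := by omega
  have hi0 : i < N := by omega
  have hii : (i+1) + 1 < N := hi2
  set P := av y i with hP
  set Q := av y (i+1) with hQ
  set R := av y (i+2) with hR
  have hPN : P < N := av_lt y hi0
  have hQN : Q < N := av_lt y hi1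
  have hRN : R < N := av_lt y hi2
  have hPQ : P ≠ Q := fun hc => by have := av_inj hi0 hi1 hc; omega
  have hPR : P ≠ R := fun hc => by have := av_inj hi0 hi2 hc; omega
  have hQR : Q ≠ R := fun hc => by have := av_inj hi1 hi2 hc; omega
  have hPi : P ≠ i := av_ne hy hi0
  have hQi1 : Q ≠ i + 1 := av_ne hy hi1
  have hRi2 : R ≠ i + 2 := av_ne hy hi2
  have hvQ : av y Q = i + 1 := av_av hy.1 hi1
  have hvR : av y R = i + 2 := av_av hy.1 hi2
  by_cases c2 : P = i + 1
  · -- pair {i, i+1}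
    have hQi : Q = i := by rw [hQ, ← c2, hP]; exact av_av hy.1 hi0
    have hRi : R ≠ i := fun hc => hQR (hQi.trans hc.symm)
    have hRi1 : R ≠ i + 1 := fun hc => hPR (c2.trans hc.symm)
    have d0 : ¬ Asc y i := not_asc_of_desc (by omega)
    rcases Nat.lt_or_ge R i with hRlt | hRge
    · -- C2b : R < i, everything stays
      have d1 : ¬ Asc y (i+1) := not_asc_of_desc (j := i+1)
        (by show av y (i+2) < av y (i+1); omega)
      rw [iStep_not_asc hy d0, iStep_not_asc hy d1, iStep_not_asc hy d0,
        iStep_not_asc hy d1]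
    · -- C2a : R > i + 2
      have hRgt : R > i + 2 := by omega
      have a1 : Asc y (i+1) := ⟨hii, by show av y (i+1) < av y (i+2); omega⟩
      set z := strip (i+1) y with hz
      have hFIz : FI z := FI_strip hy
      have az_i : av z i = i + 2 := by
        rw [hz, av_strip hii y hi0, rlA i, ← hP, c2, rlB i]
      have az_i1 : av z (i+1) = R := by
        rw [hz, av_strip hii y hi1, rlB i, ← hR,
          rl_other (show R ≠ i+1 by omega) (by omega)]
      have az_i2 : av z (i+2) = i := by
        rw [hz, av_strip hii y hi2, rlC i, ← hQ, hQi, rlA i]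
      have a2 : Asc z i := ⟨hi1, by rw [az_i, az_i1]; omega⟩
      set z' := strip i z with hz'
      have az'_i1 : av z' (i+1) = i + 2 := by
        rw [hz', av_strip hi1 z hi1, rl_right i, az_i, rlD i]
      have az'_i2 : av z' (i+2) = i + 1 := by
        rw [hz', av_strip hi1 z hi2, rlD i, az_i2, rl_left i]
      have d2 : ¬ Asc z' (i+1) := not_asc_of_desc (j := i+1)
        (by show av z' (i+2) < av z' (i+1); rw [az'_i1, az'_i2]; omega)
      rw [iStep_not_asc hy d0, iStep_asc' hy a1, ← hz, iStep_asc' hFIz a2, ← hz',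
        iStep_not_asc (FI_strip hFIz) d2]
  · by_cases c3 : Q = i + 2
    · -- pair {i+1, i+2}
      have hRi1 : R = i + 1 := by rw [hR, ← c3, hQ]; exact av_av hy.1 hi1
      have hPi1 : P ≠ i + 1 := c2
      have hPi2 : P ≠ i + 2 := fun hc => hPQ (hc.trans c3.symm)
      have d1 : ¬ Asc y (i+1) := not_asc_of_desc (j := i+1)
        (by show av y (i+2) < av y (i+1); omega)
      rcases Nat.lt_or_ge P i with hPlt | hPge
      · -- C3b : P < i
        have a1 : Asc y i := ⟨hi1, by show av y i < av y (i+1); omega⟩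
        set z := strip i y with hz
        have hFIz : FI z := FI_strip hy
        have az_i : av z i = i + 2 := by
          rw [hz, av_strip hi1 y hi0, rl_left i, ← hQ, c3, rlD i]
        have az_i1 : av z (i+1) = P := by
          rw [hz, av_strip hi1 y hi1, rl_right i, ← hP,
            rl_other (show P ≠ i by omega) (by omega)]
        have az_i2 : av z (i+2) = i := by
          rw [hz, av_strip hi1 y hi2, rlD i, ← hR, hRi1, rl_right i]
        have a2 : Asc z (i+1) := ⟨hii, by
          show av z (i+1) < av z (i+2)
          rw [az_i1, az_i2]; omega⟩
        set z2 := strip (i+1) z with hz2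
        have hFIz2 : FI z2 := FI_strip hFIz
        have az2_i : av z2 i = i + 1 := by
          rw [hz2, av_strip hii z hi0, rlA i, az_i, rlC i]
        have az2_i1 : av z2 (i+1) = i := by
          rw [hz2, av_strip hii z hi1, rlB i, az_i2, rlA i]
        have d2 : ¬ Asc z2 i := not_asc_of_desc (by rw [az2_i, az2_i1]; omega)
        rw [iStep_not_asc hy d1, iStep_asc' hy a1, ← hz, iStep_asc' hFIz a2, ← hz2,
          iStep_not_asc hFIz2 d2]
      · -- C3a : P > i + 2, everything stays
        have hPgt : P > i + 2 := by omega
        have d0 : ¬ Asc y i := not_asc_of_desc (by omega)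
        rw [iStep_not_asc hy d0, iStep_not_asc hy d1, iStep_not_asc hy d0,
          iStep_not_asc hy d1]
    · by_cases c4 : P = i + 2
      · -- pair {i, i+2}
        have hRi : R = i := by rw [hR, ← c4, hP]; exact av_av hy.1 hi0
        have hQi : Q ≠ i := fun hc => hQR (hc.trans hRi.symm)
        have hQi2 : Q ≠ i + 2 := c3
        rcases Nat.lt_or_ge Q i with hQlt | hQge
        · -- C4b : Q < i
          have d0 : ¬ Asc y i := not_asc_of_desc (by omega)
          have a1 : Asc y (i+1) := ⟨hii, by show av y (i+1) < av y (i+2); omega⟩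
          set w := strip (i+1) y with hw
          have hFIw : FI w := FI_strip hy
          have aw_i : av w i = i + 1 := by
            rw [hw, av_strip hii y hi0, rlA i, ← hP, c4, rlC i]
          have aw_i1 : av w (i+1) = i := by
            rw [hw, av_strip hii y hi1, rlB i, ← hR, hRi, rlA i]
          have aw_i2 : av w (i+2) = Q := by
            rw [hw, av_strip hii y hi2, rlC i, ← hQ,
              rl_other (show Q ≠ i+1 by omega) (by omega)]
          have d2 : ¬ Asc w i := not_asc_of_desc (by rw [aw_i, aw_i1]; omega)
          have d3 : ¬ Asc w (i+1) := not_asc_of_desc (j := i+1)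
            (by show av w (i+2) < av w (i+1); rw [aw_i1, aw_i2]; omega)
          rw [iStep_not_asc hy d0, iStep_asc' hy a1, ← hw, iStep_not_asc hFIw d2,
            iStep_not_asc hFIw d3]
        · -- C4a : Q > i + 2
          have hQgt : Q > i + 2 := by omega
          have a1 : Asc y i := ⟨hi1, by show av y i < av y (i+1); omega⟩
          set z := strip i y with hz
          have hFIz : FI z := FI_strip hy
          have az_i : av z i = Q := by
            rw [hz, av_strip hi1 y hi0, rl_left i, ← hQ,
              rl_other (show Q ≠ i by omega) (by omega)]
          have az_i1 : av z (i+1) = i + 2 := by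
            rw [hz, av_strip hi1 y hi1, rl_right i, ← hP, c4, rlD i]
          have az_i2 : av z (i+2) = i + 1 := by
            rw [hz, av_strip hi1 y hi2, rlD i, ← hR, hRi, rl_left i]
          have d1 : ¬ Asc y (i+1) := not_asc_of_desc (j := i+1)
            (by show av y (i+2) < av y (i+1); omega)
          have d2 : ¬ Asc z (i+1) := not_asc_of_desc (j := i+1)
            (by show av z (i+2) < av z (i+1); rw [az_i1, az_i2]; omega)
          have d3 : ¬ Asc z i := not_asc_of_desc (by rw [az_i, az_i1]; omega)
          rw [iStep_not_asc hy d1, iStep_asc' hy a1, ← hz, iStep_not_asc hFIz d2,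
            iStep_not_asc hFIz d3]
      · -- C1 : generic, P Q R all outside the block
        have hPi2 : P ≠ i + 2 := c4
        have hPi1 : P ≠ i + 1 := c2
        have hQi : Q ≠ i := fun hc => by
          have h5 := hvQ; rw [hc] at h5; rw [hP] at c2; exact c2 h5
        have hQi2 : Q ≠ i + 2 := c3
        have hRi : R ≠ i := fun hc => by
          have h5 := hvR; rw [hc] at h5; rw [hP] at c4; exact c4 h5
        have hRi1 : R ≠ i + 1 := fun hc => by
          have h5 := hvR; rw [hc] at h5; rw [hQ] at c3; exact c3 h5
        have hFI1 : FI (strip i y) := FI_strip hy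
        have hFI2 : FI (strip (i+1) y) := FI_strip hy
        have az_i : av (strip i y) i = Q := by
          rw [av_strip hi1 y hi0, rl_left i, ← hQ, rl_other hQi hQi1]
        have az_i1 : av (strip i y) (i+1) = P := by
          rw [av_strip hi1 y hi1, rl_right i, ← hP, rl_other hPi hPi1]
        have az_i2 : av (strip i y) (i+2) = R := by
          rw [av_strip hi1 y hi2, rlD i, ← hR, rl_other hRi hRi1]
        have aw_i : av (strip (i+1) y) i = P := by
          rw [av_strip hii y hi0, rlA i, ← hP, rl_other hPi1 (by omega)]
        have aw_i1 : av (strip (i+1) y) (i+1) = R := by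
          rw [av_strip hii y hi1, rlB i, ← hR, rl_other hRi1 (by omega)]
        have aw_i2 : av (strip (i+1) y) (i+2) = Q := by
          rw [av_strip hii y hi2, rlC i, ← hQ, rl_other hQi1 (by omega)]
        rcases Nat.lt_or_ge P Q with hpq | hpq <;> rcases Nat.lt_or_ge P R with hpr | hpr <;>
          rcases Nat.lt_or_ge Q R with hqr | hqr
        · -- P < Q < R : all ascents both sides, braid identity
          have a1 : Asc y i := ⟨hi1, by show av y i < av y (i+1); omega⟩
          have a2 : Asc (strip i y) (i+1) := ⟨hii, by
            show av (strip i y) (i+1) < av (strip i y) (i+2); rw [az_i1, az_i2]; omega⟩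
          have a3 : Asc (strip (i+1) (strip i y)) i := by
            refine ⟨hi1, ?_⟩
            show av (strip (i+1) (strip i y)) i < av (strip (i+1) (strip i y)) (i+1)
            rw [av_strip hii (strip i y) hi0, rlA i, az_i, rl_other hQi1 (by omega),
              av_strip hii (strip i y) hi1, rlB i, az_i2, rl_other hRi1 (by omega)]
            omega
          have b1 : Asc y (i+1) := ⟨hii, by show av y (i+1) < av y (i+2); omega⟩
          have b2 : Asc (strip (i+1) y) i := ⟨hi1, by
            show av (strip (i+1) y) i < av (strip (i+1) y) (i+1); rw [aw_i, aw_i1]; omega⟩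
          have b3 : Asc (strip i (strip (i+1) y)) (i+1) := by
            refine ⟨hii, ?_⟩
            show av (strip i (strip (i+1) y)) (i+1) < av (strip i (strip (i+1) y)) (i+2)
            rw [av_strip hi1 (strip (i+1) y) hi1, rl_right i, aw_i, rl_other hPi hPi1,
              av_strip hi1 (strip (i+1) y) hi2, rlD i, aw_i2, rl_other hQi hQi1]
            omega
          rw [iStep_asc' hy a1, iStep_asc' hFI1 a2, iStep_asc' (FI_strip hFI1) a3,
            iStep_asc' hy b1, iStep_asc' hFI2 b2, iStep_asc' (FI_strip hFI2) b3]
          rw [strip_def, strip_def, strip_def, strip_def, strip_def, strip_def]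
          rw [show sP N i * (sP N (i+1) * (sP N i * y * sP N i) * sP N (i+1)) * sP N i
              = (sP N i * sP N (i+1) * sP N i) * y * (sP N i * sP N (i+1) * sP N i) by group,
            show sP N (i+1) * (sP N i * (sP N (i+1) * y * sP N (i+1)) * sP N i) * sP N (i+1)
              = (sP N (i+1) * sP N i * sP N (i+1)) * y * (sP N (i+1) * sP N i * sP N (i+1))
              by group, sP_braid hi2]
        · -- branch 2 : P<Q, P<R, Q≥R : P < R < Q (132)
          have hrq : R < Q := by omega
          have a1 : Asc y i := ⟨hi1, by show av y i < av y (i+1); omega⟩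
          have a2 : Asc (strip i y) (i+1) := ⟨hii, by
            show av (strip i y) (i+1) < av (strip i y) (i+2); rw [az_i1, az_i2]; omega⟩
          have d3 : ¬ Asc (strip (i+1) (strip i y)) i := by
            apply not_asc_of_desc
            show av (strip (i+1) (strip i y)) (i+1) < av (strip (i+1) (strip i y)) i
            rw [av_strip hii (strip i y) hi0, rlA i, az_i, rl_other hQi1 (by omega),
              av_strip hii (strip i y) hi1, rlB i, az_i2, rl_other hRi1 (by omega)]
            omega
          have db1 : ¬ Asc y (i+1) := not_asc_of_desc (j := i+1)
            (by show av y (i+2) < av y (i+1); omega)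
          rw [iStep_not_asc hy db1, iStep_asc' hy a1, iStep_asc' hFI1 a2,
            iStep_not_asc (FI_strip hFI1) d3]
        · omega
        · -- branch 4 : P<Q, P≥R, Q≥R : R < P < Q (312)
          have a1 : Asc y i := ⟨hi1, by show av y i < av y (i+1); omega⟩
          have d2 : ¬ Asc (strip i y) (i+1) := not_asc_of_desc (j := i+1)
            (by show av (strip i y) (i+2) < av (strip i y) (i+1); rw [az_i1, az_i2]; omega)
          have d3 : ¬ Asc (strip i y) i :=
            not_asc_of_desc (by rw [az_i, az_i1]; omega)
          have db1 : ¬ Asc y (i+1) := not_asc_of_desc (j := i+1)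
            (by show av y (i+2) < av y (i+1); omega)
          rw [iStep_not_asc hy db1, iStep_asc' hy a1, iStep_not_asc hFI1 d2,
            iStep_not_asc hFI1 d3]
        · -- branch 5 : P≥Q, P<R, Q<R : Q < P < R (213)
          have d1 : ¬ Asc y i := not_asc_of_desc (by omega)
          have b1 : Asc y (i+1) := ⟨hii, by show av y (i+1) < av y (i+2); omega⟩
          have b2 : Asc (strip (i+1) y) i := ⟨hi1, by
            show av (strip (i+1) y) i < av (strip (i+1) y) (i+1); rw [aw_i, aw_i1]; omega⟩
          have d3 : ¬ Asc (strip i (strip (i+1) y)) (i+1) := by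
            apply not_asc_of_desc (j := i+1)
            show av (strip i (strip (i+1) y)) (i+2) < av (strip i (strip (i+1) y)) (i+1)
            rw [av_strip hi1 (strip (i+1) y) hi1, rl_right i, aw_i, rl_other hPi hPi1,
              av_strip hi1 (strip (i+1) y) hi2, rlD i, aw_i2, rl_other hQi hQi1]
            omega
          rw [iStep_not_asc hy d1, iStep_asc' hy b1, iStep_asc' hFI2 b2,
            iStep_not_asc (FI_strip hFI2) d3]
        · omega
        · -- branch 7 : P≥Q, P≥R, Q<R : Q < R < P (231)
          have d1 : ¬ Asc y i := not_asc_of_desc (by omega)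
          have b1 : Asc y (i+1) := ⟨hii, by show av y (i+1) < av y (i+2); omega⟩
          have d2 : ¬ Asc (strip (i+1) y) i :=
            not_asc_of_desc (by rw [aw_i, aw_i1]; omega)
          have hd3 : av (strip (i+1) y) (i+2) < av (strip (i+1) y) (i+1) := by
            rw [aw_i1, aw_i2]; omega
          have d3 : ¬ Asc (strip (i+1) y) (i+1) := not_asc_of_desc (j := i+1) hd3
          rw [iStep_not_asc hy d1, iStep_asc' hy b1, iStep_not_asc hFI2 d2,
            iStep_not_asc hFI2 d3]
        · -- branch 8 : all descents
          have d0 : ¬ Asc y i := not_asc_of_desc (by omega)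
          have d1 : ¬ Asc y (i+1) := not_asc_of_desc (j := i+1)
            (by show av y (i+2) < av y (i+1); omega)
          rw [iStep_not_asc hy d0, iStep_not_asc hy d1, iStep_not_asc hy d0,
            iStep_not_asc hy d1]

end Fpf

namespace Fpf
open Equiv Finset

variable {N : ℕ}

/-- avs of wfpf in convenient form -/
lemma av_wfpf_even {n k : ℕ} (h : 2*k + 1 < 2*n) : av (wfpfP n) (2*k) = 2*k + 1 := by
  rw [av_wfpf (by omega)]; unfold pv; split_ifs <;> omega

lemma av_wfpf_odd {n k : ℕ} (h : 2*k + 1 < 2*n) : av (wfpfP n) (2*k+1) = 2*k := by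
  rw [av_wfpf (by omega)]; unfold pv; split_ifs <;> omega

/-- the two fpf initial words have the same effect -/
lemma hz_key {n i : ℕ} (h : i + 2 ≤ n) :
    iStep (iStep (wfpfP n) (2*i+1)) (2*i) = iStep (iStep (wfpfP n) (2*i+1)) (2*i+2) := by
  have hN : 2*i + 3 < 2*n := by omega
  have h1 : (2*i+1) + 1 < 2*n := by omega
  have hw : FI (wfpfP n) := FI_wfpf
  have e0 : av (wfpfP n) (2*i) = 2*i+1 := av_wfpf_even (by omega)
  have e1 : av (wfpfP n) (2*i+1) = 2*i := av_wfpf_odd (by omega)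
  have e2 : av (wfpfP n) (2*i+2) = 2*i+3 := by
    have := av_wfpf_even (n := n) (k := i+1) (by omega)
    rw [show 2*(i+1) = 2*i+2 by omega] at this
    omega
  have e3 : av (wfpfP n) (2*i+3) = 2*i+2 := by
    have := av_wfpf_odd (n := n) (k := i+1) (by omega)
    rw [show 2*(i+1)+1 = 2*i+3 by omega] at this
    omega
  have ha : Asc (wfpfP n) (2*i+1) := ⟨h1, by
    show av (wfpfP n) (2*i+1) < av (wfpfP n) (2*i+2)
    rw [e1, e2]; omega⟩
  rw [iStep_asc' hw ha]
  set z := strip (2*i+1) (wfpfP n) with hz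
  have hFIz : FI z := FI_strip hw
  have z0 : av z (2*i) = 2*i+2 := by
    rw [hz, av_strip h1 (wfpfP n) (by omega), rlA (2*i), e0, rlB (2*i)]
  have z1 : av z (2*i+1) = 2*i+3 := by
    rw [hz, av_strip h1 (wfpfP n) (by omega), rlB (2*i), e2,
      rl_other (show 2*i+3 ≠ 2*i+1 by omega) (by omega)]
  have z2 : av z (2*i+2) = 2*i := by
    rw [hz, av_strip h1 (wfpfP n) (by omega), rlC (2*i), e1, rlA (2*i)]
  have z3 : av z (2*i+3) = 2*i+1 := by
    rw [hz, av_strip h1 (wfpfP n) (by omega),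
      rl_other (show 2*i+3 ≠ 2*i+1 by omega) (by omega), e3, rlC (2*i)]
  have a1 : Asc z (2*i) := ⟨by omega, by
    show av z (2*i) < av z (2*i+1); rw [z0, z1]; omega⟩
  have a2 : Asc z (2*i+2) := ⟨by omega, by
    show av z (2*i+2) < av z (2*i+2+1)
    rw [show 2*i+2+1 = 2*i+3 by omega, z2, z3]; omega⟩
  rw [iStep_asc' hFIz a1, iStep_asc' hFIz a2]
  apply strip_eq_strip hFIz (by omega : 2*i+1 < 2*n) (by omega : 2*i+2+1 < 2*n)
    (by omega)
  left
  constructor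
  · rw [z0]
  · rw [z1]

lemma hz_iWord {n i : ℕ} (h : i + 2 ≤ n) (q : List ℕ) :
    iWord (wfpfP n) ([2*i+1, 2*i] ++ q) = iWord (wfpfP n) ([2*i+1, 2*i+2] ++ q) := by
  show iWord (iStep (iStep (wfpfP n) (2*i+1)) (2*i)) q
      = iWord (iStep (iStep (wfpfP n) (2*i+1)) (2*i+2)) q
  rw [hz_key h]

/-- a single relation step preserves the endpoint and the length -/
lemma step_transfer {n : ℕ} {u v : List ℕ}
    (h : BraidStep (2*n) u v ∨ FpfHZStep n u v) :
    iWord (wfpfP n) u = iWord (wfpfP n) v ∧ u.length = v.length := by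
  rcases h with (⟨p, q, i, j, hi, hj, hij, hu, hv⟩ | ⟨p, q, i, hi, hu, hv⟩) | ⟨q, i, hi, hu, hv⟩
  · subst hu; subst hv
    constructor
    · rw [iWord_append, iWord_append, iWord_append, iWord_append]
      congr 1
      have hFI : FI (iWord (wfpfP n) p) := FI_iWord FI_wfpf p
      show iStep (iStep (iWord (wfpfP n) p) i) j = iStep (iStep (iWord (wfpfP n) p) j) i
      rcases hij with h' | h'
      · exact iStep_comm hFI h'
      · exact (iStep_comm hFI h').symm
    · simp
  · subst hu; subst hv
    constructor
    · rw [iWord_append, iWord_append, iWord_append, iWord_append]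
      congr 1
      have hFI : FI (iWord (wfpfP n) p) := FI_iWord FI_wfpf p
      exact iStep_braid hFI i
    · simp
  · subst hu; subst hv
    exact ⟨hz_iWord hi q, by simp⟩

lemma eqv_transfer {n : ℕ} {x : Equiv.Perm (Fin (2*n))} {u v : List ℕ}
    (h : Relation.EqvGen (fun l l' => BraidStep (2*n) l l' ∨ FpfHZStep n l l') u v) :
    u ∈ InvWordsP (2*n) (wfpfP n) x ↔ v ∈ InvWordsP (2*n) (wfpfP n) x := by
  induction h with
  | rel u v hr =>
    obtain ⟨he, hl⟩ := step_transfer hr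
    constructor <;> rintro ⟨h1, h2⟩
    · exact ⟨by rw [← he, h1], fun l' hl' => by rw [← hl]; exact h2 l' hl'⟩
    · exact ⟨by rw [he, h1], fun l' hl' => by rw [hl]; exact h2 l' hl'⟩
  | refl u => rfl
  | symm u v _ ih => exact ih.symm
  | trans u v w _ _ ih1 ih2 => exact ih1.trans ih2

lemma step_append {n : ℕ} {u v : List ℕ} (e : ℕ)
    (h : BraidStep (2*n) u v ∨ FpfHZStep n u v) :
    BraidStep (2*n) (u ++ [e]) (v ++ [e]) ∨ FpfHZStep n (u ++ [e]) (v ++ [e]) := by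
  rcases h with (⟨p, q, i, j, hi, hj, hij, hu, hv⟩ | ⟨p, q, i, hi, hu, hv⟩) | ⟨q, i, hi, hu, hv⟩
  · exact Or.inl (Or.inl ⟨p, q ++ [e], i, j, hi, hj, hij,
      by rw [hu]; simp, by rw [hv]; simp⟩)
  · exact Or.inl (Or.inr ⟨p, q ++ [e], i, hi, by rw [hu]; simp, by rw [hv]; simp⟩)
  · exact Or.inr ⟨q ++ [e], i, hi, by rw [hu]; simp, by rw [hv]; simp⟩

lemma eqvgen_append {n : ℕ} {u v : List ℕ} (e : ℕ)
    (h : Relation.EqvGen (fun l l' => BraidStep (2*n) l l' ∨ FpfHZStep n l l') u v) :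
    Relation.EqvGen (fun l l' => BraidStep (2*n) l l' ∨ FpfHZStep n l l')
      (u ++ [e]) (v ++ [e]) := by
  induction h with
  | rel u v hr => exact Relation.EqvGen.rel _ _ (step_append e hr)
  | refl u => exact Relation.EqvGen.refl _
  | symm u v _ ih => exact Relation.EqvGen.symm _ _ ih
  | trans u v w _ _ ih1 ih2 => exact Relation.EqvGen.trans _ _ _ ih1 ih2

end Fpf

namespace Fpf
open Equiv Finset

/-- rigidity for the linked case with no other strippables -/
lemma rigid2 {n : ℕ} {x : Equiv.Perm (Fin (2*n))} (hx : FI x) {a b : ℕ}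
    (hab : a + 2 ≤ b) (hSa : St x a) (hSb : St x b)
    (hl1 : av x a = b + 1) (hl2 : av x (a+1) = b)
    (honly : ∀ e, St x e → e = a ∨ e = b) :
    b = a + 2 ∧ a % 2 = 0 ∧ St (strip a x) (a+1) ∧
      strip (a+1) (strip a x) = wfpfP n := by
  have hbN : b + 1 < 2*n := hSb.1
  have haN : a + 1 < 2*n := hSa.1
  have hp1 : av x (b+1) = a := by rw [← hl1]; exact av_av hx.1 (by omega)
  have hp2 : av x b = a + 1 := by rw [← hl2]; exact av_av hx.1 (by omega)
  -- suffix determination, downward from the top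
  have SUF : ∀ k, b + 1 < k → k < 2*n →
      av x k = if (2*n - 1 - k) % 2 = 0 then k - 1 else k + 1 := by
    suffices H : ∀ j k, 2*n - 1 - k = j → b + 1 < k → k < 2*n →
        av x k = if (2*n - 1 - k) % 2 = 0 then k - 1 else k + 1 by
      exact fun k h1 h2 => H _ k rfl h1 h2
    intro j
    induction j using Nat.strong_induction_on with
    | _ j ih =>
      intro k hj hk1 hk2
      by_cases hpar : (2*n - 1 - k) % 2 = 0
      · rw [if_pos hpar]
        set d := av x k with hd
        have hdN : d < 2*n := av_lt x hk2
        have hdk : d ≠ k := av_ne hx hk2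
        have havd : av x d = k := av_av hx.1 hk2
        have hdlt : d < k := by
          by_contra hge
          push_neg at hge
          have hdk' : k < d := by omega
          have hIH := ih (2*n - 1 - d) (by omega) d rfl (by omega) hdN
          split_ifs at hIH <;> omega
        by_contra hne
        have hd2 : d + 2 ≤ k := by omega
        have hd1N : d + 1 < 2*n := by omega
        have h5 : av x (d+1) < k := by
          rcases Nat.lt_trichotomy (av x (d+1)) k with h' | h' | h'
          · exact h'
          · exfalso
            have := av_inj hd1N hdN (h'.trans havd.symm)
            omega
          · exfalso
            have hpN : av x (d+1) < 2*n := av_lt x hd1N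
            have havp : av x (av x (d+1)) = d + 1 := av_av hx.1 hd1N
            have hIHp := ih (2*n - 1 - av x (d+1)) (by omega) (av x (d+1)) rfl
              (by omega) hpN
            split_ifs at hIHp <;> omega
        have hst : St x d := by
          refine ⟨by omega, by omega, by omega⟩
        rcases honly d hst with h' | h'
        · rw [h', hl1] at havd; omega
        · rw [h', hp2] at havd; omega
      · rw [if_neg hpar]
        have hk1N : k + 1 < 2*n := by omega
        have hIH := ih (2*n - 1 - (k+1)) (by omega) (k+1) rfl (by omega) hk1N
        rw [if_pos (by omega)] at hIH
        have h6 : av x (k+1) = k := by omega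
        have h2 := av_av hx.1 hk1N
        rw [h6] at h2
        omega
  -- prefix determination, upward from 0
  have PRE : ∀ k, k < a → av x k = pv k := by
    intro k
    induction k using Nat.strong_induction_on with
    | _ k ih =>
      intro hka
      have hkN : k < 2*n := by omega
      by_cases hpar : k % 2 = 0
      · set d := av x k with hd
        have hdN : d < 2*n := av_lt x hkN
        have hdk : d ≠ k := av_ne hx hkN
        have havd : av x d = k := av_av hx.1 hkN
        have hgt : k < d := by
          by_contra hge
          push_neg at hge
          have hdlt : d < k := by omega
          have hIH := ih d hdlt (by omega)
          unfold pv at hIH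
          split_ifs at hIH <;> omega
        have hgoal : d = k + 1 := by
          by_contra hne
          have hd2 : k + 2 ≤ d := by omega
          have hda1 : d ≠ a + 1 := fun hc => by rw [hc, hl2] at havd; omega
          have hdb1 : d ≠ b + 1 := fun hc => by rw [hc, hp1] at havd; omega
          have hd1N : d - 1 < 2*n := by omega
          have h5 : k < av x (d-1) := by
            rcases Nat.lt_trichotomy (av x (d-1)) k with h' | h' | h'
            · exfalso
              have hIHj := ih (av x (d-1)) (by omega) (by omega)
              have havj : av x (av x (d-1)) = d - 1 := av_av hx.1 (by omega)
              unfold pv at hIHj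
              split_ifs at hIHj <;> omega
            · exfalso
              have := av_inj hd1N hdN (h'.trans havd.symm)
              omega
            · exact h'
          have hpair : av x (d-1) ≠ d := fun hc => by
            have h7 := av_av hx.1 (show d - 1 < 2*n by omega)
            rw [hc, havd] at h7
            omega
          have hst : St x (d-1) := by
            refine ⟨by omega, ?_, ?_⟩
            · rw [show d - 1 + 1 = d by omega, havd]; omega
            · rw [show d - 1 + 1 = d by omega]; exact hpair
          rcases honly (d-1) hst with h' | h'
          · omega
          · omega
        unfold pv
        rw [if_pos hpar]
        omega
      · have hk1 : k - 1 < a := by omega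
        have hIH := ih (k-1) (by omega) hk1
        unfold pv at hIH
        rw [if_pos (by omega)] at hIH
        have h6 : av x (k-1) = k := by omega
        have h2 := av_av hx.1 (show k - 1 < 2*n by omega)
        rw [h6] at h2
        unfold pv
        rw [if_neg hpar]
        omega
  -- a is even
  have haeven : a % 2 = 0 := by
    by_contra hodd
    have ha1 : a - 1 < a := by omega
    have hIH := PRE (a-1) ha1
    unfold pv at hIH
    rw [if_pos (by omega)] at hIH
    have h6 : av x (a-1) = a := by omega
    have h2 := av_av hx.1 (show a - 1 < 2*n by omega)
    rw [h6] at h2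
    rw [hl1] at h2
    omega
  -- middle determination
  have MID : ∀ k, a + 1 < k → k < b → av x k = pv k := by
    intro k
    induction k using Nat.strong_induction_on with
    | _ k ih =>
      intro hk1 hk2
      have hkN : k < 2*n := by omega
      by_cases hpar : k % 2 = 0
      · set d := av x k with hd
        have hdN : d < 2*n := av_lt x hkN
        have hdk : d ≠ k := av_ne hx hkN
        have havd : av x d = k := av_av hx.1 hkN
        have hda : d ≠ a := fun hc => by rw [hc, hl1] at havd; omega
        have hda1 : d ≠ a + 1 := fun hc => by rw [hc, hl2] at havd; omega
        have hdb : d ≠ b := fun hc => by rw [hc, hp2] at havd; omega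
        have hdb1 : d ≠ b + 1 := fun hc => by rw [hc, hp1] at havd; omega
        have hgt : k < d := by
          by_contra hge
          push_neg at hge
          have hdlt : d < k := by omega
          rcases Nat.lt_trichotomy d a with h' | h' | h'
          · have hIH := PRE d h'
            unfold pv at hIH
            split_ifs at hIH <;> omega
          · exact hda h'
          · have hIH := ih d hdlt (by omega) (by omega)
            unfold pv at hIH
            split_ifs at hIH <;> omega
        have hub : d < b := by
          by_contra hge
          push_neg at hge
          have hdgt : b + 1 < d := by omega
          have hS := SUF d hdgt hdN
          split_ifs at hS <;> omega
        have hgoal : d = k + 1 := by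
          by_contra hne
          have hd2 : k + 2 ≤ d := by omega
          have hd1N : d - 1 < 2*n := by omega
          have h5 : k < av x (d-1) := by
            rcases Nat.lt_trichotomy (av x (d-1)) k with h' | h' | h'
            · exfalso
              have havj : av x (av x (d-1)) = d - 1 := av_av hx.1 (by omega)
              rcases Nat.lt_trichotomy (av x (d-1)) a with h'' | h'' | h''
              · have hIHj := PRE (av x (d-1)) h''
                unfold pv at hIHj
                split_ifs at hIHj <;> omega
              · rw [h'', hl1] at havj; omega
              · have hmid : a + 1 < av x (d-1) := by
                  rcases Nat.lt_trichotomy (av x (d-1)) (a+1) with h3 | h3 | h3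
                  · omega
                  · exfalso; rw [h3, hl2] at havj; omega
                  · exact h3
                have hIHj := ih (av x (d-1)) (by omega) hmid (by omega)
                unfold pv at hIHj
                split_ifs at hIHj <;> omega
            · exfalso
              have := av_inj hd1N hdN (h'.trans havd.symm)
              omega
            · exact h'
          have hpair : av x (d-1) ≠ d := fun hc => by
            have h7 := av_av hx.1 (show d - 1 < 2*n by omega)
            rw [hc, havd] at h7
            omega
          have hst : St x (d-1) := by
            refine ⟨by omega, ?_, ?_⟩
            · rw [show d - 1 + 1 = d by omega, havd]; omega
            · rw [show d - 1 + 1 = d by omega]; exact hpair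
          rcases honly (d-1) hst with h' | h'
          · omega
          · omega
        unfold pv
        rw [if_pos hpar]
        omega
      · have hIH := ih (k-1) (by omega) (by omega) (by omega)
        unfold pv at hIH
        rw [if_pos (by omega)] at hIH
        have h6 : av x (k-1) = k := by omega
        have h2 := av_av hx.1 (show k - 1 < 2*n by omega)
        rw [h6] at h2
        unfold pv
        rw [if_neg hpar]
        omega
  -- b = a + 2
  have hb2 : b = a + 2 := by
    by_contra hne
    rcases Nat.lt_or_ge (a+3) b with h' | h'
    · -- b ≥ a + 4 case and b = a+3 case
      have hm := MID (a+2) (by omega) (by omega)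
      unfold pv at hm
      rw [if_pos (by omega)] at hm
      have hst : St x (a+1) := by
        refine ⟨by omega, ?_, ?_⟩
        · rw [show a + 1 + 1 = a + 2 by omega, hm, hl2]; omega
        · rw [hl2]; omega
      rcases honly (a+1) hst with h'' | h'' <;> omega
    · -- b = a + 3
      have hb3 : b = a + 3 := by omega
      have hm := MID (a+2) (by omega) (by omega)
      unfold pv at hm
      rw [if_pos (by omega)] at hm
      -- av x (a+2) = a+3 = b = av x (a+1) : contradiction
      have := av_inj (show a+2 < 2*n by omega) (show a+1 < 2*n by omega)
        (by rw [hm, hl2]; omega)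
      omega
  subst hb2
  -- block values
  have hB0 : av x a = a + 3 := by omega
  have hB1 : av x (a+1) = a + 2 := by omega
  have hB2 : av x (a+2) = a + 1 := by
    have := av_av hx.1 (show a + 1 < 2*n by omega)
    rw [hB1] at this
    omega
  have hB3 : av x (a+3) = a := by
    have := av_av hx.1 (show a < 2*n by omega)
    rw [hB0] at this
    omega
  have haN' : a + 3 < 2*n := by omega
  have ha0 : a < 2*n := by omega
  have ha1' : a + 1 < 2*n := by omega
  have ha2' : a + 2 < 2*n := by omega
  -- values of z = strip a x
  have az0 : av (strip a x) a = a + 2 := by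
    rw [av_strip (by omega) x ha0, rl_left a, hB1,
      rl_other (show a+2 ≠ a by omega) (by omega)]
  have az1 : av (strip a x) (a+1) = a + 3 := by
    rw [av_strip (by omega) x ha1', rl_right a, hB0,
      rl_other (show a+3 ≠ a by omega) (by omega)]
  have az2 : av (strip a x) (a+2) = a := by
    rw [av_strip (by omega) x ha2', rlD a, hB2, rl_right a]
  have az3 : av (strip a x) (a+3) = a + 1 := by
    rw [av_strip (by omega) x haN',
      rl_other (show a+3 ≠ a by omega) (by omega), hB3, rl_left a]
  have hStz : St (strip a x) (a+1) := by
    refine ⟨by omega, ?_, ?_⟩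
    · rw [show a + 1 + 1 = a + 2 by omega, az1, az2]; omega
    · rw [az1]; omega
  refine ⟨rfl, haeven, hStz, ?_⟩
  -- outside values of x are the wfpf pattern
  have hout : ∀ k, k < 2*n → k ≠ a → k ≠ a+1 → k ≠ a+2 → k ≠ a+3 → av x k = pv k := by
    intro k hk k0 k1 k2 k3
    rcases Nat.lt_trichotomy k a with h' | h' | h'
    · exact PRE k h'
    · exact absurd h' k0
    · exact SUF k (by omega) hk
      |>.trans (by split_ifs with hp <;> unfold pv <;> split_ifs <;> omega)
  -- conclude y' = wfpf
  apply perm_eq_of_av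
  intro k hk
  rw [av_wfpf hk]
  by_cases k0 : k = a
  · rw [k0, av_strip (show a+1+1 < 2*n by omega) (strip a x) ha0,
      rl_other (show a ≠ a+1 by omega) (by omega), az0, rlC a]
    unfold pv; split_ifs <;> omega
  by_cases k1 : k = a + 1
  · rw [k1, av_strip (show a+1+1 < 2*n by omega) (strip a x) ha1',
      rl_left (a+1), show (a+1)+1 = a+2 by omega, az2, rlA a]
    unfold pv; split_ifs <;> omega
  by_cases k2 : k = a + 2
  · rw [k2, av_strip (show a+1+1 < 2*n by omega) (strip a x) ha2',
      show rl (a+1) (a+2) = a+1 from rlC a, az1,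
      rl_other (show a+3 ≠ a+1 by omega) (by omega)]
    unfold pv; split_ifs <;> omega
  by_cases k3 : k = a + 3
  · rw [k3, av_strip (show a+1+1 < 2*n by omega) (strip a x) haN',
      rl_other (show a+3 ≠ a+1 by omega) (by omega), az3, rlB a]
    unfold pv; split_ifs <;> omega
  · have hxk := hout k hk k0 k1 k2 k3
    have hvk1 : av x k ≠ a + 1 := fun hc => by
      have := av_av hx.1 hk
      rw [hc, hB1] at this
      omega
    have hvk2 : av x k ≠ a + 2 := fun hc => by
      have := av_av hx.1 hk
      rw [hc, hB2] at this
      omega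
    have hvk0 : av x k ≠ a := fun hc => by
      have := av_av hx.1 hk
      rw [hc, hB0] at this
      omega
    have hzk : av (strip a x) k = av x k := by
      rw [av_strip (by omega) x hk, rl_other (show k ≠ a from k0) (show k ≠ a+1 from k1),
        rl_other hvk0 hvk1]
    rw [av_strip (show a+1+1 < 2*n by omega) (strip a x) hk,
      rl_other (show k ≠ a+1 from k1) (by omega), hzk, rl_other hvk1 hvk2]
    exact hxk

end Fpf

namespace Fpf
open Equiv Finset

variable {N : ℕ}

lemma rl_rl (i j : ℕ) : rl i (rl i j) = j := by unfold rl; split_ifs <;> omega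

/-- case (i): two distant non-linked strippables commute -/
lemma case_i_facts {x : Equiv.Perm (Fin N)} (hx : FI x) {a b : ℕ} (hab : a + 2 ≤ b)
    (hSa : St x a) (hSb : St x b) (hnl : ¬(av x a = b + 1 ∧ av x (a+1) = b)) :
    St (strip a x) b ∧ St (strip b x) a ∧ strip b (strip a x) = strip a (strip b x) := by
  have haN : a + 1 < N := hSa.1
  have hbN : b + 1 < N := hSb.1
  have hda : av x (a+1) < av x a := hSa.2.1
  have hdb : av x (b+1) < av x b := hSb.2.1
  have hpa : av x a ≠ a + 1 := hSa.2.2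
  have hpb : av x b ≠ b + 1 := hSb.2.2
  have hnl2 : ¬(av x (b+1) = a ∧ av x b = a + 1) := by
    rintro ⟨h1, h2⟩
    exact hnl ⟨by rw [← h1]; exact av_av hx.1 (by omega),
      by rw [← h2]; exact av_av hx.1 (by omega)⟩
  have e1 : av (strip a x) b = rl a (av x b) := by
    rw [av_strip haN x (by omega), rl_other (show b ≠ a by omega) (by omega)]
  have e2 : av (strip a x) (b+1) = rl a (av x (b+1)) := by
    rw [av_strip haN x hbN, rl_other (show b+1 ≠ a by omega) (by omega)]
  have e3 : av (strip b x) a = rl b (av x a) := by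
    rw [av_strip hbN x (by omega), rl_other (show a ≠ b by omega) (by omega)]
  have e4 : av (strip b x) (a+1) = rl b (av x (a+1)) := by
    rw [av_strip hbN x haN, rl_other (show a+1 ≠ b by omega) (by omega)]
  refine ⟨⟨hbN, ?_, ?_⟩, ⟨haN, ?_, ?_⟩, ?_⟩
  · rw [show b + 1 = b + 1 from rfl] at e2
    rw [e1, e2]
    exact rl_lt_rl hdb (fun hc => hnl2 ⟨hc.1, hc.2⟩)
  · rw [e1]
    intro hc
    have := rl_rl a (av x b)
    rw [hc, rl_other (show b+1 ≠ a by omega) (by omega)] at this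
    exact hpb this.symm
  · rw [e3, e4]
    apply rl_lt_rl hda
    rintro ⟨h1, h2⟩
    apply hnl
    refine ⟨h2, h1⟩
  · rw [e3]
    intro hc
    have := rl_rl b (av x a)
    rw [hc, rl_other (show a+1 ≠ b by omega) (by omega)] at this
    exact hpa this.symm
  · rw [strip_def, strip_def, strip_def, strip_def]
    rw [show sP N b * (sP N a * x * sP N a) * sP N b
        = (sP N b * sP N a) * x * (sP N a * sP N b) by group,
      show sP N a * (sP N b * x * sP N b) * sP N a
        = (sP N a * sP N b) * x * (sP N b * sP N a) by group,
      sP_comm hab]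

/-- case (ii): two adjacent strippables satisfy the braid pattern -/
lemma case_ii_facts {x : Equiv.Perm (Fin N)} (hx : FI x) {a : ℕ}
    (hSa : St x a) (hSb : St x (a+1)) :
    St (strip a x) (a+1) ∧ St (strip (a+1) (strip a x)) a ∧
    St (strip (a+1) x) a ∧ St (strip a (strip (a+1) x)) (a+1) ∧
    strip a (strip (a+1) (strip a x)) = strip (a+1) (strip a (strip (a+1) x)) := by
  have haN : a + 1 < N := hSa.1
  have hbN : a + 2 < N := hSb.1
  have ha0 : a < N := by omega
  have hQP : av x (a+1) < av x a := hSa.2.1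
  have hRQ : av x (a+2) < av x (a+1) := hSb.2.1
  have hpa : av x a ≠ a + 1 := hSa.2.2
  have hpb : av x (a+1) ≠ a + 2 := hSb.2.2
  set P := av x a with hP
  set Q := av x (a+1) with hQ
  set R := av x (a+2) with hR
  have hPa : P ≠ a := av_ne hx ha0
  have hQa1 : Q ≠ a + 1 := av_ne hx haN
  have hRa2 : R ≠ a + 2 := av_ne hx hbN
  have hPa2 : P ≠ a + 2 := by
    intro hc
    have h2 := av_av hx.1 ha0
    rw [← hP, hc] at h2
    -- av x (a+2) = a, so R = a; Q between a and a+2 → Q = a+1 contradiction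
    have hRa : R = a := by rw [hR]; exact h2
    omega
  have hQa : Q ≠ a := by
    intro hc
    have h2 := av_av hx.1 haN
    rw [← hQ, hc] at h2
    rw [hP] at hpa
    exact hpa h2
  have hRa : R ≠ a := by
    intro hc
    have h2 := av_av hx.1 hbN
    rw [← hR, hc] at h2
    rw [hP] at hPa2
    exact hPa2 h2
  have hRa1 : R ≠ a + 1 := by
    intro hc
    have h2 := av_av hx.1 hbN
    rw [← hR, hc] at h2
    rw [hQ] at hpb
    exact hpb h2
  -- values of strip a x
  have az0 : av (strip a x) a = Q := by
    rw [av_strip haN x ha0, rl_left a, ← hQ, rl_other hQa hQa1]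
  have az1 : av (strip a x) (a+1) = P := by
    rw [av_strip haN x haN, rl_right a, ← hP, rl_other hPa hpa]
  have az2 : av (strip a x) (a+2) = R := by
    rw [av_strip haN x hbN, rlD a, ← hR, rl_other hRa hRa1]
  have hS1 : St (strip a x) (a+1) := by
    refine ⟨hbN, ?_, ?_⟩
    · show av (strip a x) (a+2) < av (strip a x) (a+1)
      rw [az1, az2]; omega
    · rw [az1]; exact hPa2
  -- values of strip (a+1) (strip a x)
  have az2_0 : av (strip (a+1) (strip a x)) a = Q := by
    rw [av_strip hbN (strip a x) ha0, rlA a, az0, rl_other hQa1 (by omega)]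
  have az2_1 : av (strip (a+1) (strip a x)) (a+1) = R := by
    rw [av_strip hbN (strip a x) haN, rlB a, az2, rl_other hRa1 hRa2]
  have hS2 : St (strip (a+1) (strip a x)) a := by
    refine ⟨haN, ?_, ?_⟩
    · rw [az2_0, az2_1]; omega
    · rw [az2_0]; exact hQa1
  -- values of strip (a+1) x
  have aw0 : av (strip (a+1) x) a = P := by
    rw [av_strip hbN x ha0, rlA a, ← hP, rl_other hpa hPa2]
  have aw1 : av (strip (a+1) x) (a+1) = R := by
    rw [av_strip hbN x haN, rlB a, ← hR, rl_other hRa1 hRa2]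
  have aw2 : av (strip (a+1) x) (a+2) = Q := by
    rw [av_strip hbN x hbN, rlC a, ← hQ, rl_other hQa1 hpb]
  have hS3 : St (strip (a+1) x) a := by
    refine ⟨haN, ?_, ?_⟩
    · rw [aw0, aw1]; omega
    · rw [aw0]; exact hpa
  -- values of strip a (strip (a+1) x)
  have aw2_1 : av (strip a (strip (a+1) x)) (a+1) = P := by
    rw [av_strip haN (strip (a+1) x) haN, rl_right a, aw0, rl_other hPa hpa]
  have aw2_2 : av (strip a (strip (a+1) x)) (a+2) = Q := by
    rw [av_strip haN (strip (a+1) x) hbN, rlD a, aw2, rl_other hQa hQa1]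
  have hS4 : St (strip a (strip (a+1) x)) (a+1) := by
    refine ⟨hbN, ?_, ?_⟩
    · show av (strip a (strip (a+1) x)) (a+2) < av (strip a (strip (a+1) x)) (a+1)
      rw [aw2_1, aw2_2]; omega
    · rw [aw2_1]; exact hPa2
  refine ⟨hS1, hS2, hS3, hS4, ?_⟩
  rw [strip_def, strip_def, strip_def, strip_def, strip_def, strip_def]
  rw [show sP N a * (sP N (a+1) * (sP N a * x * sP N a) * sP N (a+1)) * sP N a
      = (sP N a * sP N (a+1) * sP N a) * x * (sP N a * sP N (a+1) * sP N a) by group,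
    show sP N (a+1) * (sP N a * (sP N (a+1) * x * sP N (a+1)) * sP N a) * sP N (a+1)
      = (sP N (a+1) * sP N a * sP N (a+1)) * x * (sP N (a+1) * sP N a * sP N (a+1))
      by group, sP_braid hbN]

end Fpf

namespace Fpf
open Equiv Finset

/-- main connectivity theorem -/
lemma main_conn {n : ℕ} :
    ∀ L, ∀ x : Equiv.Perm (Fin (2*n)), FI x → lenP x = L →
      ∀ u ∈ SWds (wfpfP n) x, ∀ v ∈ SWds (wfpfP n) x,
        Relation.EqvGen (fun l l' => BraidStep (2*n) l l' ∨ FpfHZStep n l l') u v := by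
  intro L
  induction L using Nat.strong_induction_on with
  | _ L ih =>
    intro x hx hL u hu v hv
    set R := (fun l l' => BraidStep (2*n) l l' ∨ FpfHZStep n l l') with hRdef
    have same : ∀ (e : ℕ) (w1 w2 : List ℕ), w1 ++ [e] ∈ SWds (wfpfP n) x →
        w2 ++ [e] ∈ SWds (wfpfP n) x →
        Relation.EqvGen R (w1 ++ [e]) (w2 ++ [e]) := by
      intro e w1 w2 h1 h2
      obtain ⟨hst, h1'⟩ := SWds_unsnoc FI_wfpf h1
      obtain ⟨-, h2'⟩ := SWds_unsnoc FI_wfpf h2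
      obtain ⟨hFI, -, -, hlen⟩ := strip_facts hx hst
      exact eqvgen_append e
        (ih (lenP (strip e x)) (by omega) (strip e x) hFI rfl w1 h1' w2 h2')
    rcases List.eq_nil_or_concat u with hu0 | ⟨u', a, hua⟩
    · subst hu0
      have hxw : wfpfP n = x := hu.2
      obtain ⟨hv1, hv2⟩ := hv
      have hlv := lenP_iWord_SW FI_wfpf hv1
      rw [hv2, ← hxw] at hlv
      have hv0 : v = [] := List.eq_nil_of_length_eq_zero (by omega)
      rw [hv0]
      exact Relation.EqvGen.refl _
    rcases List.eq_nil_or_concat v with hv0 | ⟨v', b, hvb⟩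
    · subst hv0
      have hxw : wfpfP n = x := hv.2
      obtain ⟨hu1, hu2⟩ := hu
      have hlu := lenP_iWord_SW FI_wfpf hu1
      rw [hu2, ← hxw] at hlu
      have hu0 : u = [] := List.eq_nil_of_length_eq_zero (by omega)
      rw [hu0]
      exact Relation.EqvGen.refl _
    rw [List.concat_eq_append] at hua hvb
    subst hua
    subst hvb
    obtain ⟨hSta, hu'⟩ := SWds_unsnoc FI_wfpf hu
    obtain ⟨hStb, hv'⟩ := SWds_unsnoc FI_wfpf hv
    -- the cross-connection for directly-connectable pairs
    have cross2 : ∀ (a b : ℕ), a < b → St x a → St x b →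
        ¬(av x a = b + 1 ∧ av x (a+1) = b) →
        ∃ W1 W2, W1 ++ [a] ∈ SWds (wfpfP n) x ∧ W2 ++ [b] ∈ SWds (wfpfP n) x ∧
          Relation.EqvGen R (W1 ++ [a]) (W2 ++ [b]) := by
      intro a b hab hSa hSb hnl
      by_cases hadj : b = a + 1
      · subst hadj
        obtain ⟨hS1, hS2, hS3, hS4, heq⟩ := case_ii_facts hx hSa hSb
        obtain ⟨W, hW⟩ := SWds_nonempty (strip a (strip (a+1) (strip a x)))
          (FI_strip (FI_strip (FI_strip hx)))
        have m1 : W ++ [a] ∈ SWds (wfpfP n) (strip (a+1) (strip a x)) :=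
          SWds_snoc (FI_strip (FI_strip hx)) hS2 hW
        have m2 : (W ++ [a]) ++ [a+1] ∈ SWds (wfpfP n) (strip a x) :=
          SWds_snoc (FI_strip hx) hS1 m1
        have m3 : ((W ++ [a]) ++ [a+1]) ++ [a] ∈ SWds (wfpfP n) x :=
          SWds_snoc hx hSa m2
        have hW' : W ∈ SWds (wfpfP n) (strip (a+1) (strip a (strip (a+1) x))) := by
          rw [← heq]; exact hW
        have m1' : W ++ [a+1] ∈ SWds (wfpfP n) (strip a (strip (a+1) x)) :=
          SWds_snoc (FI_strip (FI_strip hx)) hS4 hW'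
        have m2' : (W ++ [a+1]) ++ [a] ∈ SWds (wfpfP n) (strip (a+1) x) :=
          SWds_snoc (FI_strip hx) hS3 m1'
        have m3' : ((W ++ [a+1]) ++ [a]) ++ [a+1] ∈ SWds (wfpfP n) x :=
          SWds_snoc hx hSb m2'
        refine ⟨(W ++ [a]) ++ [a+1], (W ++ [a+1]) ++ [a], m3, m3', ?_⟩
        apply Relation.EqvGen.rel
        left
        right
        refine ⟨W, [], a, hSb.1, ?_, ?_⟩
        · simp
        · simp
      · have hab2 : a + 2 ≤ b := by omega
        obtain ⟨hS1, hS2, heq⟩ := case_i_facts hx hab2 hSa hSb hnl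
        obtain ⟨W, hW⟩ := SWds_nonempty (strip b (strip a x))
          (FI_strip (FI_strip hx))
        have m1 : W ++ [b] ∈ SWds (wfpfP n) (strip a x) :=
          SWds_snoc (FI_strip hx) hS1 hW
        have m2 : (W ++ [b]) ++ [a] ∈ SWds (wfpfP n) x := SWds_snoc hx hSa m1
        have hW' : W ∈ SWds (wfpfP n) (strip a (strip b x)) := by
          rw [← heq]; exact hW
        have m1' : W ++ [a] ∈ SWds (wfpfP n) (strip b x) :=
          SWds_snoc (FI_strip hx) hS2 hW'
        have m2' : (W ++ [a]) ++ [b] ∈ SWds (wfpfP n) x := SWds_snoc hx hSb m1'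
        refine ⟨W ++ [b], W ++ [a], m2, m2', ?_⟩
        apply Relation.EqvGen.rel
        left
        left
        exact ⟨W, [], b, a, hSb.1, hSa.1, Or.inr hab2, by simp, by simp⟩
    have cross : ∀ (a b : ℕ), a < b → St x a → St x b →
        ∃ W1 W2, W1 ++ [a] ∈ SWds (wfpfP n) x ∧ W2 ++ [b] ∈ SWds (wfpfP n) x ∧
          Relation.EqvGen R (W1 ++ [a]) (W2 ++ [b]) := by
      intro a b hab hSa hSb
      have haN2 : a + 1 < 2*n := hSa.1
      have hbN2 : b + 1 < 2*n := hSb.1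
      by_cases hlink : av x a = b + 1 ∧ av x (a+1) = b
      · have hab2 : a + 2 ≤ b := by
          rcases Nat.lt_or_ge (a+1) b with h' | h'
          · omega
          · exfalso
            have hb1 : b = a + 1 := by omega
            have h2 := hlink.2
            rw [hb1] at h2
            exact av_ne hx (show a + 1 < 2*n by omega) h2
        by_cases hthird : ∃ e, St x e ∧ e ≠ a ∧ e ≠ b
        · obtain ⟨e, hSe, hea, heb⟩ := hthird
          have heN : e + 1 < 2*n := hSe.1
          -- connect a–e and e–b through cross2
          have hae : ∃ Z1 Z2, Z1 ++ [a] ∈ SWds (wfpfP n) x ∧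
              Z2 ++ [e] ∈ SWds (wfpfP n) x ∧
              Relation.EqvGen R (Z1 ++ [a]) (Z2 ++ [e]) := by
            rcases Nat.lt_or_ge a e with h' | h'
            · have hnl : ¬(av x a = e + 1 ∧ av x (a+1) = e) := by
                rintro ⟨h1, -⟩
                rw [hlink.1] at h1
                omega
              obtain ⟨W1, W2, q1, q2, q3⟩ := cross2 a e h' hSa hSe hnl
              exact ⟨W1, W2, q1, q2, q3⟩
            · have h'' : e < a := by omega
              have hnl : ¬(av x e = a + 1 ∧ av x (e+1) = a) := by
                rintro ⟨-, h2⟩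
                have h3 : av x a = e + 1 := by rw [← h2]; exact av_av hx.1 (by omega)
                rw [hlink.1] at h3
                omega
              obtain ⟨W1, W2, q1, q2, q3⟩ := cross2 e a h'' hSe hSa hnl
              exact ⟨W2, W1, q2, q1, Relation.EqvGen.symm _ _ q3⟩
          have heb' : ∃ Z1 Z2, Z1 ++ [e] ∈ SWds (wfpfP n) x ∧
              Z2 ++ [b] ∈ SWds (wfpfP n) x ∧
              Relation.EqvGen R (Z1 ++ [e]) (Z2 ++ [b]) := by
            rcases Nat.lt_or_ge e b with h' | h'
            · have hnl : ¬(av x e = b + 1 ∧ av x (e+1) = b) := by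
                rintro ⟨h1, -⟩
                rw [← hlink.1] at h1
                exact hea (av_inj (by omega) (by omega) h1)
              obtain ⟨W1, W2, q1, q2, q3⟩ := cross2 e b h' hSe hSb hnl
              exact ⟨W1, W2, q1, q2, q3⟩
            · have h'' : b < e := by omega
              have hnl : ¬(av x b = e + 1 ∧ av x (b+1) = e) := by
                rintro ⟨h1, -⟩
                have h3 : av x b = a + 1 := by
                  rw [← hlink.2]; exact av_av hx.1 (by omega)
                rw [h3] at h1
                omega
              obtain ⟨W1, W2, q1, q2, q3⟩ := cross2 b e h'' hSb hSe hnl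
              exact ⟨W2, W1, q2, q1, Relation.EqvGen.symm _ _ q3⟩
          obtain ⟨Z1, Z2, p1, p2, p3⟩ := hae
          obtain ⟨Z3, Z4, p4, p5, p6⟩ := heb'
          exact ⟨Z1, Z4, p1, p5, Relation.EqvGen.trans _ _ _ p3
            (Relation.EqvGen.trans _ _ _ (same e Z2 Z3 p2 p4) p6)⟩
        · -- rigid case
          push_neg at hthird
          have honly : ∀ e, St x e → e = a ∨ e = b := by
            intro e hSe
            by_contra hc
            push_neg at hc
            exact hc.2 (hthird e hSe hc.1)
          obtain ⟨hb2, haev, hStz, hwf⟩ :=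
            rigid2 hx hab2 hSa hSb hlink.1 hlink.2 honly
          subst hb2
          have m0 : ([] : List ℕ) ∈ SWds (wfpfP n) (strip (a+1) (strip a x)) := by
            refine ⟨trivial, ?_⟩
            rw [iWord_nil, hwf]
          have m1 : [a+1] ∈ SWds (wfpfP n) (strip a x) := by
            have := SWds_snoc (FI_strip hx) hStz m0
            simpa using this
          have m2 : [a+1] ++ [a] ∈ SWds (wfpfP n) x := SWds_snoc hx hSa m1
          have hstrips : strip (a+2) x = strip a x := by
            symm
            apply strip_eq_strip hx hSa.1 hSb.1 (by omega)
            right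
            exact ⟨hlink.1, hlink.2⟩
          have m1' : [a+1] ∈ SWds (wfpfP n) (strip (a+2) x) := by
            rw [hstrips]; exact m1
          have m2' : [a+1] ++ [a+2] ∈ SWds (wfpfP n) x := SWds_snoc hx hSb m1'
          refine ⟨[a+1], [a+1], m2, m2', ?_⟩
          apply Relation.EqvGen.rel
          right
          refine ⟨[], a / 2, by omega, ?_, ?_⟩
          · have h1 : 2 * (a/2) = a := by omega
            rw [h1]
            simp
          · have h1 : 2 * (a/2) = a := by omega
            rw [h1]
            simp
      · -- not linked : direct
        exact cross2 a b hab hSa hSb hlink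
    rcases Nat.lt_trichotomy a b with hab | hab | hab
    · obtain ⟨W1, W2, q1, q2, q3⟩ := cross a b hab hSta hStb
      exact Relation.EqvGen.trans _ _ _ (same a u' W1 hu q1)
        (Relation.EqvGen.trans _ _ _ q3 (same b W2 v' q2 hv))
    · subst hab
      exact same a u' v' hu hv
    · obtain ⟨W1, W2, q1, q2, q3⟩ := cross b a hab hStb hSta
      exact Relation.EqvGen.trans _ _ _ (same a u' W2 hu q2)
        (Relation.EqvGen.trans _ _ _ (Relation.EqvGen.symm _ _ q3)
          (same b W1 v' q1 hv))

end Fpf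

/-- For each fixed-point-free involution `x ∈ I_fpf(S_{2n})`, the set
`R̂_fpf(x) = R̂(w_fpf, x)` is a single equivalence class under the equivalence relation
generated by the braid relations of `S_{2n}` together with the initial relations
`(s_{2i}, s_{2i-1}, …) ∼ (s_{2i}, s_{2i+1}, …)`. -/
theorem fpf_invWords_eqv_class {n : ℕ} (x : Equiv.Perm (Fin (2 * n)))
    (hx : x * x = 1) (hfpf : ∀ i, x i ≠ i) :
    (InvWordsP (2 * n) (wfpfP n) x).Nonempty ∧
      ∀ u ∈ InvWordsP (2 * n) (wfpfP n) x, ∀ v : List ℕ,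
        v ∈ InvWordsP (2 * n) (wfpfP n) x ↔
          Relation.EqvGen (fun l l' => BraidStep (2 * n) l l' ∨ FpfHZStep n l l') u v := by
  have hFI : Fpf.FI x := ⟨hx, hfpf⟩
  have hne := Fpf.SWds_nonempty x hFI
  have heq := Fpf.invWords_eq_SWds Fpf.FI_wfpf hne
  constructor
  · rw [heq]; exact hne
  · intro u hu v
    constructor
    · intro hv
      rw [heq] at hu hv
      exact Fpf.main_conn (lenP x) x hFI rfl u hu v hv
    · intro h
      exact (Fpf.eqv_transfer h).mp hu
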